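/- arXiv:1306.0157 — 17 statements merged into one kernel-verified Lean document; each statement's English description precedes it below -/
import Mathlib

section
/- If X is a nonnegative random variable with mean a ∈ (0,∞), Y has the size-biased distribution of X (i.e., E[g(Y)] = E[X g(X)]/a for all bounded measurable g), and there is a coupling with Y ≤ X + c almost surely for some c > 0, then for all x > 0, P(X ≥ x) ≤ (a/x) · P(X ≥ x − c). -/
open MeasureTheory Real

/-! For `x > 0`, Markov's inequality on the event `{X ≥ x}` and the size-bias identity give
`x P(X ≥ x) ≤ E[X; X ≥ x] = a P(Y ≥ x)`, and the coupling `Y ≤ X + c` gives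
`P(Y ≥ x) ≤ P(X ≥ x - c)`. -/

namespace SizeBias

variable {Ω : Type*} [MeasurableSpace Ω] {μ : Measure Ω} {X Y : Ω → ℝ} {a : ℝ}

lemma abs_indicator_one_le (B : Set ℝ) (y : ℝ) : |B.indicator (1 : ℝ → ℝ) y| ≤ 1 := by
  by_cases hy : y ∈ B <;> simp [hy]

lemma setIntegral_preimage_eq_mul_integral_indicator (hXm : Measurable X) (ha : a ≠ 0)
    (hsb : ∀ g : ℝ → ℝ, Measurable g → (∃ C, ∀ x, |g x| ≤ C) →
        ∫ ω, g (Y ω) ∂μ = (∫ ω, X ω * g (X ω) ∂μ) / a)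
    {B : Set ℝ} (hB : MeasurableSet B) :
    ∫ ω in X ⁻¹' B, X ω ∂μ = a * ∫ ω, B.indicator 1 (Y ω) ∂μ := by
  have hX : (fun ω => X ω * B.indicator 1 (X ω)) = (X ⁻¹' B).indicator X := by
    funext ω
    by_cases hω : X ω ∈ B <;> simp [hω]
  rw [hsb _ (measurable_one.indicator hB) ⟨1, abs_indicator_one_le B⟩, hX,
    integral_indicator (hXm hB), mul_div_cancel₀ _ ha]

lemma integral_indicator_Ici_le_measureReal [IsFiniteMeasure μ] (hXm : Measurable X) {c : ℝ}
    (hcoup : ∀ᵐ ω ∂μ, Y ω ≤ X ω + c) (x : ℝ) :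
    ∫ ω, (Set.Ici x).indicator 1 (Y ω) ∂μ ≤ μ.real {ω | x - c ≤ X ω} := by
  have hs : MeasurableSet {ω | x - c ≤ X ω} := hXm measurableSet_Ici
  rw [← integral_indicator_one hs]
  refine integral_mono_of_nonneg (.of_forall fun ω => Set.indicator_nonneg (by simp) _)
    ((integrable_const 1).indicator hs) ?_
  filter_upwards [hcoup] with ω hω
  by_cases hY : x ≤ Y ω
  · have hX : ω ∈ {ω | x - c ≤ X ω} := show x - c ≤ X ω by linarith
    rw [Set.indicator_of_mem (Set.mem_Ici.2 hY), Set.indicator_of_mem hX]; rfl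
  · simp [hY, Set.indicator_nonneg]

end SizeBias

open SizeBias in
theorem stmt_0_general
    {Ω : Type*} [MeasurableSpace Ω] (μ : Measure Ω) [IsProbabilityMeasure μ]
    (X Y : Ω → ℝ) (a c : ℝ) (ha : 0 < a)
    (hXm : Measurable X)
    (hXint : Integrable X μ)
    (hsb : ∀ g : ℝ → ℝ, Measurable g → (∃ C, ∀ x, |g x| ≤ C) →
        ∫ ω, g (Y ω) ∂μ = (∫ ω, X ω * g (X ω) ∂μ) / a)
    (hcoup : ∀ᵐ ω ∂μ, Y ω ≤ X ω + c) :
    ∀ x : ℝ, 0 < x →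
      (μ {ω | x ≤ X ω}).toReal ≤ (a / x) * (μ {ω | x - c ≤ X ω}).toReal := by
  intro x hx
  have hmarkov : x * μ.real {ω | x ≤ X ω} ≤ ∫ ω in X ⁻¹' Set.Ici x, X ω ∂μ :=
    setIntegral_ge_of_const_le_real (hXm measurableSet_Ici) (measure_ne_top μ _)
      (fun _ h => h) hXint.integrableOn
  have hbias := setIntegral_preimage_eq_mul_integral_indicator hXm ha.ne' hsb
    (measurableSet_Ici (a := x))
  have hshift := integral_indicator_Ici_le_measureReal hXm hcoup x
  rw [div_mul_eq_mul_div, le_div_iff₀ hx, mul_comm]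
  calc x * μ.real {ω | x ≤ X ω} ≤ a * ∫ ω, (Set.Ici x).indicator 1 (Y ω) ∂μ := hbias ▸ hmarkov
    _ ≤ a * μ.real {ω | x - c ≤ X ω} := mul_le_mul_of_nonneg_left hshift ha.le

theorem stmt_0
    {Ω : Type*} [MeasurableSpace Ω] (μ : Measure Ω) [IsProbabilityMeasure μ]
    (X Y : Ω → ℝ) (a c : ℝ) (ha : 0 < a) (hc : 0 < c)
    (hXm : Measurable X) (hYm : Measurable Y)
    (hXnn : ∀ᵐ ω ∂μ, 0 ≤ X ω)
    (hXint : Integrable X μ)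
    (hmean : ∫ ω, X ω ∂μ = a)
    (hsb : ∀ g : ℝ → ℝ, Measurable g → (∃ C, ∀ x, |g x| ≤ C) →
        ∫ ω, g (Y ω) ∂μ = (∫ ω, X ω * g (X ω) ∂μ) / a)
    (hcoup : ∀ᵐ ω ∂μ, Y ω ≤ X ω + c) :
    ∀ x : ℝ, 0 < x →
      (μ {ω | x ≤ X ω}).toReal ≤ (a / x) * (μ {ω | x - c ≤ X ω}).toReal :=
  stmt_0_general μ X Y a c ha hXm hXint hsb hcoup
end

section
/- If X is a nonnegative random variable with mean a ∈ (0,∞), Y is a size-biased version of X, and there is a coupling with Y ≤ X + c almost surely (c > 0), then for all real x, P(X ≤ x) ≤ ((x+c)/a) · P(X ≤ x + c). -/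
/-!
Let `g` be the indicator of `(-∞, x + c]`. Since `Y ≤ X + c`, the event `{X ≤ x}` is contained
(almost surely) in `{Y ≤ x + c}`, so `P(X ≤ x) ≤ E[g(Y)]`. Size-biasing turns `E[g(Y)]` into
`E[X g(X)] / a`, and `X g(X) ≤ (x + c) g(X)` pointwise.
-/

open MeasureTheory

section IndicatorIic

variable {Ω : Type*} [MeasurableSpace Ω] {μ : Measure Ω}

lemma abs_indicator_Iic_one_le (t y : ℝ) : |(Set.Iic t).indicator (1 : ℝ → ℝ) y| ≤ 1 := by
  simpa using norm_indicator_le_norm_self (1 : ℝ → ℝ) y (s := Set.Iic t)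

lemma integral_indicator_Iic_comp {Y : Ω → ℝ} (hY : Measurable Y) (t : ℝ) :
    ∫ ω, (Set.Iic t).indicator (1 : ℝ → ℝ) (Y ω) ∂μ = μ.real {ω | Y ω ≤ t} :=
  integral_indicator_one (hY measurableSet_Iic)

lemma integral_mul_indicator_Iic_comp_le [IsFiniteMeasure μ] {X : Ω → ℝ} (hXm : Measurable X)
    (hX : Integrable X μ) (t : ℝ) :
    ∫ ω, X ω * (Set.Iic t).indicator (1 : ℝ → ℝ) (X ω) ∂μ ≤ t * μ.real {ω | X ω ≤ t} := by
  have hmeas : MeasurableSet {ω | X ω ≤ t} := hXm measurableSet_Iic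
  rw [← integral_indicator_one hmeas, ← integral_const_mul]
  refine integral_mono
    (hX.mul_bdd ((measurable_one.indicator measurableSet_Iic).comp hXm).aestronglyMeasurable
      (.of_forall fun ω => abs_indicator_Iic_one_le t (X ω)))
    (((integrable_const 1).indicator hmeas).const_mul t) fun ω => ?_
  by_cases h : X ω ≤ t <;> simp [h]

end IndicatorIic

theorem stmt_1_general
    {Ω : Type*} [MeasurableSpace Ω] (μ : Measure Ω) [IsProbabilityMeasure μ]
    (X Y : Ω → ℝ) (a c : ℝ) (ha : 0 < a)
    (hXm : Measurable X) (hYm : Measurable Y)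
    (hXint : Integrable X μ)
    (hsb : ∀ g : ℝ → ℝ, Measurable g → (∃ C, ∀ x, |g x| ≤ C) →
        ∫ ω, g (Y ω) ∂μ = (∫ ω, X ω * g (X ω) ∂μ) / a)
    (hcoup : ∀ᵐ ω ∂μ, Y ω ≤ X ω + c) :
    ∀ x : ℝ,
      (μ {ω | X ω ≤ x}).toReal ≤ ((x + c) / a) * (μ {ω | X ω ≤ x + c}).toReal := by
  intro x
  have hsub : {ω | X ω ≤ x} ≤ᵐ[μ] {ω | Y ω ≤ x + c} := by
    filter_upwards [hcoup] with ω hω hX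
    exact hω.trans (add_le_add_left hX c)
  calc μ.real {ω | X ω ≤ x} ≤ μ.real {ω | Y ω ≤ x + c} :=
        ENNReal.toReal_mono (measure_ne_top _ _) (measure_mono_ae hsub)
    _ = (∫ ω, X ω * (Set.Iic (x + c)).indicator 1 (X ω) ∂μ) / a := by
      rw [← integral_indicator_Iic_comp hYm]
      exact hsb _ (measurable_one.indicator measurableSet_Iic)
        ⟨1, abs_indicator_Iic_one_le (x + c)⟩
    _ ≤ (x + c) * μ.real {ω | X ω ≤ x + c} / a := by
      gcongr
      exact integral_mul_indicator_Iic_comp_le hXm hXint (x + c)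
    _ = (x + c) / a * μ.real {ω | X ω ≤ x + c} := by ring

theorem stmt_1
    {Ω : Type*} [MeasurableSpace Ω] (μ : Measure Ω) [IsProbabilityMeasure μ]
    (X Y : Ω → ℝ) (a c : ℝ) (ha : 0 < a) (hc : 0 < c)
    (hXm : Measurable X) (hYm : Measurable Y)
    (hXnn : ∀ᵐ ω ∂μ, 0 ≤ X ω)
    (hXint : Integrable X μ)
    (hmean : ∫ ω, X ω ∂μ = a)
    (hsb : ∀ g : ℝ → ℝ, Measurable g → (∃ C, ∀ x, |g x| ≤ C) →
        ∫ ω, g (Y ω) ∂μ = (∫ ω, X ω * g (X ω) ∂μ) / a)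
    (hcoup : ∀ᵐ ω ∂μ, Y ω ≤ X ω + c) :
    ∀ x : ℝ,
      (μ {ω | X ω ≤ x}).toReal ≤ ((x + c) / a) * (μ {ω | X ω ≤ x + c}).toReal :=
  stmt_1_general μ X Y a c ha hXm hYm hXint hsb hcoup
end

section
/- Assume X ≥ 0 with mean a ∈ (0,∞) admits a c-bounded size bias coupling (Y = X* with Y ≤ X + c a.s.). Then for all x ≥ a, with k = ⌊(x−a)/c⌋, P(X ≥ x) ≤ ∏_{i=0}^{k} a/(x − i c). -/
/-!
Testing the size-bias identity against `g = 1[t, ∞)` gives `t P(X ≥ t) ≤ E[X; X ≥ t] = a P(Y ≥ t)`,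
and the coupling `Y ≤ X + c` bounds `P(Y ≥ t)` by `P(X ≥ t - c)`. Hence
`P(X ≥ t) ≤ (a / t) P(X ≥ t - c)` for `t > 0`; iterating this `k + 1` times from `t = x` keeps every
`t` at least `a`, and the last probability is bounded by `1`.
-/

open MeasureTheory Real

section Iteration

variable {f : ℝ → ℝ} {a c : ℝ}

theorem le_prod_mul_of_le_div_mul (ha : 0 ≤ a) (hrec : ∀ t, 0 < t → f t ≤ a / t * f (t - c))
    (x : ℝ) (n : ℕ) (hpos : ∀ i < n, 0 < x - i * c) :
    f x ≤ (∏ i ∈ Finset.range n, a / (x - i * c)) * f (x - n * c) := by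
  induction n with
  | zero => simp
  | succ n ih =>
    have hprod : 0 ≤ ∏ i ∈ Finset.range n, a / (x - i * c) :=
      Finset.prod_nonneg fun i hi =>
        div_nonneg ha (hpos i (by rw [Finset.mem_range] at hi; omega)).le
    calc f x ≤ (∏ i ∈ Finset.range n, a / (x - i * c)) * f (x - n * c) :=
          ih fun i hi => hpos i (by omega)
      _ ≤ (∏ i ∈ Finset.range n, a / (x - i * c)) * (a / (x - n * c) * f (x - n * c - c)) :=
          mul_le_mul_of_nonneg_left (hrec _ (hpos n (by omega))) hprod
      _ = (∏ i ∈ Finset.range (n + 1), a / (x - i * c)) * f (x - (n + 1 : ℕ) * c) := by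
          rw [Finset.prod_range_succ, mul_assoc, Nat.cast_succ, add_mul, one_mul,
            sub_add_eq_sub_sub]

end Iteration

section SizeBias

variable {Ω : Type*} [MeasurableSpace Ω] {μ : Measure Ω} {X Y : Ω → ℝ} {a c : ℝ}

/-- `P(Y ∈ dx) = (x / a) P(X ∈ dx)`, in integrated form. -/
def IsSizeBias (μ : Measure Ω) (X Y : Ω → ℝ) (a : ℝ) : Prop :=
  ∀ g : ℝ → ℝ, Measurable g → (∃ C, ∀ x, |g x| ≤ C) →
    ∫ ω, g (Y ω) ∂μ = (∫ ω, X ω * g (X ω) ∂μ) / a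

theorem IsSizeBias.measureReal_le_eq (hsb : IsSizeBias μ X Y a) (hXm : Measurable X)
    (hYm : Measurable Y) (t : ℝ) :
    μ.real {ω | t ≤ Y ω} = (∫ ω in {ω | t ≤ X ω}, X ω ∂μ) / a := by
  have hg := hsb ((Set.Ici t).indicator 1) (measurable_one.indicator measurableSet_Ici)
    ⟨1, fun y => by by_cases h : t ≤ y <;> simp [Set.indicator, h]⟩
  have hY : (fun ω => (Set.Ici t).indicator (1 : ℝ → ℝ) (Y ω)) = {ω | t ≤ Y ω}.indicator 1 := by
    ext ω; by_cases h : t ≤ Y ω <;> simp [Set.indicator, h]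
  have hX : (fun ω => X ω * (Set.Ici t).indicator (1 : ℝ → ℝ) (X ω)) =
      {ω | t ≤ X ω}.indicator X := by
    ext ω; by_cases h : t ≤ X ω <;> simp [Set.indicator, h]
  rwa [hY, hX, integral_indicator_one (measurableSet_le measurable_const hYm),
    integral_indicator (measurableSet_le measurable_const hXm)] at hg

variable [IsFiniteMeasure μ]

theorem measureReal_le_le_of_ae_le_add (hcoup : ∀ᵐ ω ∂μ, Y ω ≤ X ω + c) (t : ℝ) :
    μ.real {ω | t ≤ Y ω} ≤ μ.real {ω | t - c ≤ X ω} := by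
  refine ENNReal.toReal_mono (measure_ne_top _ _) (measure_mono_ae ?_)
  filter_upwards [hcoup] with ω hω (hY : t ≤ Y ω)
  show t - c ≤ X ω
  linarith

theorem IsSizeBias.measureReal_le_le_div_mul (hsb : IsSizeBias μ X Y a) (ha : 0 < a)
    (hXm : Measurable X) (hYm : Measurable Y) (hXint : Integrable X μ)
    (hcoup : ∀ᵐ ω ∂μ, Y ω ≤ X ω + c) {t : ℝ} (ht : 0 < t) :
    μ.real {ω | t ≤ X ω} ≤ a / t * μ.real {ω | t - c ≤ X ω} := by
  have hmarkov : t * μ.real {ω | t ≤ X ω} ≤ ∫ ω in {ω | t ≤ X ω}, X ω ∂μ :=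
    setIntegral_ge_of_const_le_real (measurableSet_le measurable_const hXm) (measure_ne_top _ _)
      (fun _ h => h) hXint.integrableOn
  rw [div_mul_eq_mul_div, le_div_iff₀ ht, mul_comm]
  calc t * μ.real {ω | t ≤ X ω} ≤ a * μ.real {ω | t ≤ Y ω} := by
        rwa [hsb.measureReal_le_eq hXm hYm, mul_div_cancel₀ _ ha.ne']
    _ ≤ a * μ.real {ω | t - c ≤ X ω} :=
        mul_le_mul_of_nonneg_left (measureReal_le_le_of_ae_le_add hcoup t) ha.le

end SizeBias

theorem stmt_2_general
    {Ω : Type*} [MeasurableSpace Ω] (μ : Measure Ω) [IsProbabilityMeasure μ]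
    (X Y : Ω → ℝ) (a c : ℝ) (ha : 0 < a) (hc : 0 < c)
    (hXm : Measurable X) (hYm : Measurable Y)
    (hXint : Integrable X μ)
    (hsb : ∀ g : ℝ → ℝ, Measurable g → (∃ C, ∀ x, |g x| ≤ C) →
        ∫ ω, g (Y ω) ∂μ = (∫ ω, X ω * g (X ω) ∂μ) / a)
    (hcoup : ∀ᵐ ω ∂μ, Y ω ≤ X ω + c) :
    ∀ x : ℝ, a ≤ x →
      (μ {ω | x ≤ X ω}).toReal ≤
        ∏ i ∈ Finset.range (⌊(x - a) / c⌋₊ + 1), a / (x - i * c) := by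
  intro x hx
  set k := ⌊(x - a) / c⌋₊
  have hk : k * c ≤ x - a := (le_div_iff₀ hc).1 (Nat.floor_le (div_nonneg (by linarith) hc.le))
  have hpos : ∀ i < k + 1, 0 < x - i * c := fun i hi => by
    have : (i : ℝ) * c ≤ k * c := by gcongr; exact_mod_cast Nat.lt_succ_iff.1 hi
    linarith
  have hrec : ∀ t, 0 < t → μ.real {ω | t ≤ X ω} ≤ a / t * μ.real {ω | t - c ≤ X ω} :=
    fun t ht => IsSizeBias.measureReal_le_le_div_mul hsb ha hXm hYm hXint hcoup ht
  calc μ.real {ω | x ≤ X ω}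
      ≤ (∏ i ∈ Finset.range (k + 1), a / (x - i * c)) * μ.real {ω | x - (k + 1 : ℕ) * c ≤ X ω} :=
        le_prod_mul_of_le_div_mul (f := fun t => μ.real {ω | t ≤ X ω}) ha.le hrec x (k + 1) hpos
    _ ≤ ∏ i ∈ Finset.range (k + 1), a / (x - i * c) :=
        mul_le_of_le_one_right
          (Finset.prod_nonneg fun i hi => div_nonneg ha.le (hpos i (Finset.mem_range.1 hi)).le)
          measureReal_le_one

theorem stmt_2
    {Ω : Type*} [MeasurableSpace Ω] (μ : Measure Ω) [IsProbabilityMeasure μ]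
    (X Y : Ω → ℝ) (a c : ℝ) (ha : 0 < a) (hc : 0 < c)
    (hXm : Measurable X) (hYm : Measurable Y)
    (hXnn : ∀ᵐ ω ∂μ, 0 ≤ X ω)
    (hXint : Integrable X μ)
    (hmean : ∫ ω, X ω ∂μ = a)
    (hsb : ∀ g : ℝ → ℝ, Measurable g → (∃ C, ∀ x, |g x| ≤ C) →
        ∫ ω, g (Y ω) ∂μ = (∫ ω, X ω * g (X ω) ∂μ) / a)
    (hcoup : ∀ᵐ ω ∂μ, Y ω ≤ X ω + c) :
    ∀ x : ℝ, a ≤ x →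
      (μ {ω | x ≤ X ω}).toReal ≤
        ∏ i ∈ Finset.range (⌊(x - a) / c⌋₊ + 1), a / (x - i * c) :=
  stmt_2_general μ X Y a c ha hc hXm hYm hXint hsb hcoup
end

section
/- Assume X ≥ 0 with mean a ∈ (0,∞) admits a c-bounded size bias coupling (Y = X* with Y ≤ X + c a.s.). Then for all 0 ≤ x ≤ a, with k = ⌊(a−x)/c⌋, P(X ≤ x) ≤ ∏_{i=1}^{k} (x + i c)/a. -/
/-!
Testing the size-bias identity against `g = 1_{(-∞, t + c]}` gives
`P(Y ≤ t + c) = E[X; X ≤ t + c] / a ≤ (t + c) P(X ≤ t + c) / a`, and the coupling `Y ≤ X + c`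
gives `P(X ≤ t) ≤ P(Y ≤ t + c)`. Hence `P(X ≤ t) ≤ (t + c) / a · P(X ≤ t + c)`; iterating this
`⌊(a - x) / c⌋` times from `t = x` and bounding the last probability by `1` gives the product.
-/

open MeasureTheory Real

namespace SizeBias

variable {Ω : Type*} [MeasurableSpace Ω] {μ : Measure Ω} {X Y : Ω → ℝ}

def HasSizeBiasedLaw (μ : Measure Ω) (Y X : Ω → ℝ) (a : ℝ) : Prop :=
  ∀ g : ℝ → ℝ, Measurable g → (∃ C, ∀ x, |g x| ≤ C) →
    ∫ ω, g (Y ω) ∂μ = (∫ ω, X ω * g (X ω) ∂μ) / a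

lemma integral_indicator_Iic_comp (hY : Measurable Y) (s : ℝ) :
    ∫ ω, (Set.Iic s).indicator 1 (Y ω) ∂μ = μ.real {ω | Y ω ≤ s} := by
  simp_rw [← Set.indicator_comp_right]
  exact integral_indicator_one (hY measurableSet_Iic)

lemma integral_mul_indicator_Iic_comp_le [IsFiniteMeasure μ] (hX : Measurable X)
    (hXint : Integrable X μ) (s : ℝ) :
    ∫ ω, X ω * (Set.Iic s).indicator 1 (X ω) ∂μ ≤ s * μ.real {ω | X ω ≤ s} := by
  have hS : MeasurableSet {ω | X ω ≤ s} := hX measurableSet_Iic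
  calc ∫ ω, X ω * (Set.Iic s).indicator 1 (X ω) ∂μ = ∫ ω in {ω | X ω ≤ s}, X ω ∂μ := by
        rw [← integral_indicator hS]
        congr with ω
        by_cases h : X ω ≤ s <;> simp [h]
    _ ≤ ∫ _ in {ω | X ω ≤ s}, s ∂μ :=
        setIntegral_mono_on hXint.integrableOn (integrableOn_const (measure_ne_top _ _)) hS
          fun _ hω => hω
    _ = s * μ.real {ω | X ω ≤ s} := by rw [setIntegral_const, smul_eq_mul, mul_comm]

theorem measureReal_le_div_mul_measureReal_of_hasSizeBiasedLaw [IsFiniteMeasure μ] {a c : ℝ}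
    (ha : 0 ≤ a) (hX : Measurable X) (hY : Measurable Y) (hXint : Integrable X μ)
    (hsb : HasSizeBiasedLaw μ Y X a) (hcoup : ∀ᵐ ω ∂μ, Y ω ≤ X ω + c) (t : ℝ) :
    μ.real {ω | X ω ≤ t} ≤ (t + c) / a * μ.real {ω | X ω ≤ t + c} := by
  set g : ℝ → ℝ := (Set.Iic (t + c)).indicator 1
  have hg : Measurable g := measurable_one.indicator measurableSet_Iic
  have hg_bdd : ∃ C, ∀ x, |g x| ≤ C :=
    ⟨1, fun x => by by_cases h : x ≤ t + c <;> simp [g, h]⟩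
  calc μ.real {ω | X ω ≤ t} ≤ μ.real {ω | Y ω ≤ t + c} := by
        refine ENNReal.toReal_mono (measure_ne_top _ _) (measure_mono_ae ?_)
        filter_upwards [hcoup] with ω hω hXt
        exact hω.trans (add_le_add_left hXt c)
    _ = (∫ ω, X ω * g (X ω) ∂μ) / a := by rw [← integral_indicator_Iic_comp hY, hsb g hg hg_bdd]
    _ ≤ (t + c) * μ.real {ω | X ω ≤ t + c} / a := by
        gcongr
        exact integral_mul_indicator_Iic_comp_le hX hXint (t + c)
    _ = (t + c) / a * μ.real {ω | X ω ≤ t + c} := by ring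

end SizeBias

lemma le_prod_mul_of_forall_le_div_mul {F : ℝ → ℝ} {a c x : ℝ} (ha : 0 ≤ a) (hc : 0 ≤ c)
    (hx : 0 ≤ x) (hF : ∀ t, F t ≤ (t + c) / a * F (t + c)) (n : ℕ) :
    F x ≤ (∏ i ∈ Finset.Icc 1 n, (x + i * c) / a) * F (x + n * c) := by
  induction n with
  | zero => simp
  | succ n ih =>
    calc F x ≤ (∏ i ∈ Finset.Icc 1 n, (x + i * c) / a) * F (x + n * c) := ih
      _ ≤ (∏ i ∈ Finset.Icc 1 n, (x + i * c) / a) *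
          ((x + n * c + c) / a * F (x + n * c + c)) :=
        mul_le_mul_of_nonneg_left (hF _) (by positivity)
      _ = (∏ i ∈ Finset.Icc 1 (n + 1), (x + i * c) / a) * F (x + (n + 1 : ℕ) * c) := by
        rw [Finset.prod_Icc_succ_top (by omega), Nat.cast_succ, add_one_mul, ← add_assoc,
          mul_assoc]

theorem stmt_3_general
    {Ω : Type*} [MeasurableSpace Ω] (μ : Measure Ω) [IsProbabilityMeasure μ]
    (X Y : Ω → ℝ) (a c : ℝ) (ha : 0 < a) (hc : 0 < c)
    (hXm : Measurable X) (hYm : Measurable Y)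
    (hXint : Integrable X μ)
    (hsb : ∀ g : ℝ → ℝ, Measurable g → (∃ C, ∀ x, |g x| ≤ C) →
        ∫ ω, g (Y ω) ∂μ = (∫ ω, X ω * g (X ω) ∂μ) / a)
    (hcoup : ∀ᵐ ω ∂μ, Y ω ≤ X ω + c) :
    ∀ x : ℝ, 0 ≤ x → x ≤ a →
      (μ {ω | X ω ≤ x}).toReal ≤
        ∏ i ∈ Finset.Icc 1 ⌊(a - x) / c⌋₊, (x + i * c) / a := by
  intro x hx _
  have hstep :=
    SizeBias.measureReal_le_div_mul_measureReal_of_hasSizeBiasedLaw ha.le hXm hYm hXint hsb hcoup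
  calc (μ {ω | X ω ≤ x}).toReal
      ≤ (∏ i ∈ Finset.Icc 1 ⌊(a - x) / c⌋₊, (x + i * c) / a) *
          μ.real {ω | X ω ≤ x + ⌊(a - x) / c⌋₊ * c} :=
        le_prod_mul_of_forall_le_div_mul ha.le hc.le hx hstep _
    _ ≤ ∏ i ∈ Finset.Icc 1 ⌊(a - x) / c⌋₊, (x + i * c) / a :=
        mul_le_of_le_one_right (by positivity) measureReal_le_one

theorem stmt_3
    {Ω : Type*} [MeasurableSpace Ω] (μ : Measure Ω) [IsProbabilityMeasure μ]
    (X Y : Ω → ℝ) (a c : ℝ) (ha : 0 < a) (hc : 0 < c)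
    (hXm : Measurable X) (hYm : Measurable Y)
    (hXnn : ∀ᵐ ω ∂μ, 0 ≤ X ω)
    (hXint : Integrable X μ)
    (hmean : ∫ ω, X ω ∂μ = a)
    (hsb : ∀ g : ℝ → ℝ, Measurable g → (∃ C, ∀ x, |g x| ≤ C) →
        ∫ ω, g (Y ω) ∂μ = (∫ ω, X ω * g (X ω) ∂μ) / a)
    (hcoup : ∀ᵐ ω ∂μ, Y ω ≤ X ω + c) :
    ∀ x : ℝ, 0 ≤ x → x ≤ a →
      (μ {ω | X ω ≤ x}).toReal ≤
        ∏ i ∈ Finset.Icc 1 ⌊(a - x) / c⌋₊, (x + i * c) / a :=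
  stmt_3_general μ X Y a c ha hc hXm hYm hXint hsb hcoup
end

section
/- For all a > 0 and all f ∈ [0,1], a^{1−f} Γ(a+f) ≤ Γ(a+1), with equality if and only if f = 0 or f = 1. -/
/-!
Write `L = log ∘ Γ`. Since `Γ(a + 1) = a Γ(a)`, the inequality is equivalent to
`L(a + f) ≤ (1 - f) L(a) + f L(a + 1)`, which is the log-convexity of `Γ`. For strictness,
the gap `D(x) = (1 - f) L(x) + f L(x + 1) - L(x + f) ≥ 0` satisfies
`D(x + 1) = D(x) + (1 - f) log x + f log (x + 1) - log (x + f)`, and the last three terms are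
negative for `0 < f < 1` by strict concavity of `log`; hence `D(a) > D(a + 1) ≥ 0`.
-/

open Real

namespace Real

variable {x t : ℝ}

lemma log_Gamma_add_one (hx : 0 < x) : log (Gamma (x + 1)) = log x + log (Gamma x) := by
  rw [Gamma_add_one hx.ne', log_mul hx.ne' (Gamma_pos_of_pos hx).ne']

lemma log_Gamma_add_le (hx : 0 < x) (ht0 : 0 ≤ t) (ht1 : t ≤ 1) :
    log (Gamma (x + t)) ≤ (1 - t) * log (Gamma x) + t * log (Gamma (x + 1)) := by
  have h := convexOn_log_Gamma.2 (Set.mem_Ioi.mpr hx) (Set.mem_Ioi.mpr (by linarith : 0 < x + 1))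
    (sub_nonneg.mpr ht1) ht0 (by ring)
  simp only [smul_eq_mul, Function.comp_apply] at h
  rwa [show (1 - t) * x + t * (x + 1) = x + t by ring] at h

lemma log_Gamma_add_lt (hx : 0 < x) (ht0 : 0 < t) (ht1 : t < 1) :
    log (Gamma (x + t)) < (1 - t) * log (Gamma x) + t * log (Gamma (x + 1)) := by
  have hconvex := log_Gamma_add_le (by linarith : 0 < x + 1) ht0.le ht1.le
  have hconcave := strictConcaveOn_log_Ioi.2 (Set.mem_Ioi.mpr hx)
    (Set.mem_Ioi.mpr (by linarith : 0 < x + 1)) (by linarith) (sub_pos.mpr ht1) ht0 (by ring)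
  simp only [smul_eq_mul] at hconcave
  rw [show (1 - t) * x + t * (x + 1) = x + t by ring] at hconcave
  rw [show x + 1 + t = x + t + 1 by ring, log_Gamma_add_one (by linarith),
    log_Gamma_add_one (by linarith : 0 < x + 1)] at hconvex
  linear_combination hconvex + hconcave + (1 - t) * log_Gamma_add_one hx

lemma log_rpow_mul_Gamma_add (hx : 0 < x) (hxt : 0 < x + t) :
    log (x ^ (1 - t) * Gamma (x + t)) = log (Gamma (x + 1)) -
      ((1 - t) * log (Gamma x) + t * log (Gamma (x + 1)) - log (Gamma (x + t))) := by
  rw [log_mul (rpow_pos_of_pos hx _).ne' (Gamma_pos_of_pos hxt).ne', log_rpow hx,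
    log_Gamma_add_one hx]
  ring

lemma rpow_mul_Gamma_add_le (hx : 0 < x) (ht0 : 0 ≤ t) (ht1 : t ≤ 1) :
    x ^ (1 - t) * Gamma (x + t) ≤ Gamma (x + 1) := by
  have hpos : 0 < x ^ (1 - t) * Gamma (x + t) :=
    mul_pos (rpow_pos_of_pos hx _) (Gamma_pos_of_pos (by linarith))
  rw [← log_le_log_iff hpos (Gamma_pos_of_pos (by linarith)), log_rpow_mul_Gamma_add hx (by linarith)]
  linarith [log_Gamma_add_le hx ht0 ht1]

lemma rpow_mul_Gamma_add_lt (hx : 0 < x) (ht0 : 0 < t) (ht1 : t < 1) :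
    x ^ (1 - t) * Gamma (x + t) < Gamma (x + 1) := by
  have hpos : 0 < x ^ (1 - t) * Gamma (x + t) :=
    mul_pos (rpow_pos_of_pos hx _) (Gamma_pos_of_pos (by linarith))
  rw [← log_lt_log_iff hpos (Gamma_pos_of_pos (by linarith)), log_rpow_mul_Gamma_add hx (by linarith)]
  linarith [log_Gamma_add_lt hx ht0 ht1]

end Real

theorem stmt_4 (a f : ℝ) (ha : 0 < a) (hf0 : 0 ≤ f) (hf1 : f ≤ 1) :
    a ^ (1 - f) * Real.Gamma (a + f) ≤ Real.Gamma (a + 1) ∧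
      (a ^ (1 - f) * Real.Gamma (a + f) = Real.Gamma (a + 1) ↔ f = 0 ∨ f = 1) := by
  refine ⟨rpow_mul_Gamma_add_le ha hf0 hf1, fun heq => ?_, ?_⟩
  · by_contra! hf
    exact (rpow_mul_Gamma_add_lt ha (hf0.lt_of_ne' hf.1) (hf1.lt_of_ne hf.2)).ne heq
  · rintro (rfl | rfl)
    · rw [sub_zero, add_zero, rpow_one, Gamma_add_one ha.ne']
    · norm_num
end

section
/- For a > 0 and x ≥ a with k = ⌊x − a⌋, the product ∏_{i=0}^{k} a/(x − i) satisfies ∏_{i=0}^{k} a/(x − i) ≤ a^{x−a} Γ(a+1)/Γ(x+1), with equality if and only if x − a is an integer. -/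
/-!
Writing `x - a = k + f` with `k = ⌊x - a⌋₊` and `f` the fractional part, the recursion
`Γ(s + 1) = s Γ(s)` turns the product into `a ^ (k + 1) Γ(a + f) / Γ(x + 1)`, and the claim becomes
`Γ(a + f) ≤ a ^ f Γ(a)`, with equality iff `f = 0`. For `0 < f < 1` this is strict Jensen for the
strictly concave map `t ↦ t ^ f` under the law `Gamma(a, 1)`, whose mean is `a` and whose `f`-th
moment is `Γ(a + f) / Γ(a)`.
-/

open Real MeasureTheory Set

namespace ProbabilityTheory

variable {a r : ℝ}

lemma gammaMeasure_absolutelyContinuous (a r : ℝ) : gammaMeasure a r ≪ volume :=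
  withDensity_absolutelyContinuous _ _

lemma gammaMeasure_Iio_zero (a r : ℝ) : gammaMeasure a r (Iio 0) = 0 := by
  rw [gammaMeasure, withDensity_apply _ measurableSet_Iio]
  exact lintegral_gammaPDF_of_nonpos le_rfl

lemma ae_nonneg_gammaMeasure (a r : ℝ) : ∀ᵐ t ∂gammaMeasure a r, 0 ≤ t :=
  ae_iff.2 <| measure_mono_null (fun _ ht => not_le.1 ht) (gammaMeasure_Iio_zero a r)

lemma measurable_gammaPDF (a r : ℝ) : Measurable (gammaPDF a r) :=
  (measurable_gammaPDFReal a r).ennreal_ofReal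

lemma integrable_gammaMeasure_iff (ha : 0 < a) (hr : 0 < r) {g : ℝ → ℝ} :
    Integrable g (gammaMeasure a r) ↔ Integrable (fun t => gammaPDFReal a r t * g t) := by
  rw [gammaMeasure, integrable_withDensity_iff_integrable_smul'
    (measurable_gammaPDF a r) (ae_of_all _ fun _ => ENNReal.ofReal_lt_top)]
  simp only [gammaPDF, ENNReal.toReal_ofReal (gammaPDFReal_nonneg ha hr _), smul_eq_mul]

lemma integral_gammaMeasure_eq (ha : 0 < a) (hr : 0 < r) (g : ℝ → ℝ) :
    ∫ t, g t ∂gammaMeasure a r = ∫ t, gammaPDFReal a r t * g t := by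
  rw [gammaMeasure, integral_withDensity_eq_integral_toReal_smul
    (measurable_gammaPDF a r) (ae_of_all _ fun _ => ENNReal.ofReal_lt_top)]
  simp only [gammaPDF, ENNReal.toReal_ofReal (gammaPDFReal_nonneg ha hr _), smul_eq_mul]

lemma gammaPDFReal_one_mul_rpow_ae_eq (a c : ℝ) :
    (fun t => gammaPDFReal a 1 t * t ^ c) =ᵐ[volume]
      (Ioi 0).indicator fun t => (Gamma a)⁻¹ * (exp (-t) * t ^ (a + c - 1)) := by
  filter_upwards [Measure.ae_ne volume 0] with t ht
  rcases ht.lt_or_gt with ht | ht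
  · rw [indicator_of_notMem (show t ∉ Ioi 0 from not_lt.2 ht.le)]
    simp [gammaPDFReal, ht.not_ge]
  · rw [indicator_of_mem (mem_Ioi.2 ht), gammaPDFReal, if_pos ht.le,
      show a + c - 1 = a - 1 + c by ring, rpow_add ht]
    simp only [one_rpow, one_mul]
    ring

lemma integrable_rpow_gammaMeasure (ha : 0 < a) {c : ℝ} (hac : 0 < a + c) :
    Integrable (fun t => t ^ c) (gammaMeasure a 1) := by
  rw [integrable_gammaMeasure_iff ha one_pos,
    integrable_congr (gammaPDFReal_one_mul_rpow_ae_eq a c),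
    integrable_indicator_iff measurableSet_Ioi]
  exact (GammaIntegral_convergent hac).const_mul _

lemma integral_rpow_gammaMeasure (ha : 0 < a) {c : ℝ} (hac : 0 < a + c) :
    ∫ t, t ^ c ∂gammaMeasure a 1 = Gamma (a + c) / Gamma a := by
  rw [integral_gammaMeasure_eq ha one_pos,
    integral_congr_ae (gammaPDFReal_one_mul_rpow_ae_eq a c), integral_indicator measurableSet_Ioi,
    integral_const_mul, ← Gamma_eq_integral hac, inv_mul_eq_div]

end ProbabilityTheory

lemma MeasureTheory.not_ae_eq_const_of_absolutelyContinuous {μ : Measure ℝ} [NeZero μ]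
    (hμ : μ ≪ volume) (c : ℝ) : ¬ (fun t => t) =ᵐ[μ] fun _ => c := by
  intro h
  obtain ⟨t, hteq, htne⟩ := (h.and (hμ.ae_le (Measure.ae_ne volume c))).exists
  exact htne hteq

open ProbabilityTheory in
lemma Real.Gamma_add_lt_rpow_mul_Gamma {a f : ℝ} (ha : 0 < a) (hf₀ : 0 < f) (hf₁ : f < 1) :
    Gamma (a + f) < a ^ f * Gamma a := by
  have := isProbabilityMeasure_gammaMeasure ha one_pos
  have hmean : ∫ t, t ∂gammaMeasure a 1 = a := by
    have h := integral_rpow_gammaMeasure ha (c := 1) (by linarith)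
    simp only [rpow_one] at h
    rw [h, Gamma_add_one ha.ne', mul_div_cancel_right₀ _ (Gamma_pos_of_pos ha).ne']
  have hid : Integrable (fun t : ℝ => t) (gammaMeasure a 1) := by
    simpa using integrable_rpow_gammaMeasure ha (c := 1) (by linarith)
  have hjensen := (strictConcaveOn_rpow hf₀ hf₁).ae_eq_const_or_lt_map_average
    (continuousOn_id.rpow_const fun _ _ => Or.inr hf₀.le) isClosed_Ici
    (ae_nonneg_gammaMeasure a 1) hid (integrable_rpow_gammaMeasure ha (by linarith))
  rcases hjensen with hconst | hlt
  · exact absurd hconst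
      (not_ae_eq_const_of_absolutelyContinuous (gammaMeasure_absolutelyContinuous a 1) _)
  · rw [average_eq_integral, average_eq_integral, hmean,
      integral_rpow_gammaMeasure ha (by linarith), div_lt_iff₀ (Gamma_pos_of_pos ha)] at hlt
    exact hlt

lemma Real.Gamma_add_one_eq_prod_mul_Gamma (x : ℝ) {k : ℕ} (hk : (k : ℝ) < x) :
    Gamma (x + 1) = (∏ i ∈ Finset.range (k + 1), (x - i)) * Gamma (x - k) := by
  induction k with
  | zero => simpa using Gamma_add_one (by simpa using hk.ne')
  | succ k ih =>
    push_cast at hk ⊢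
    have hstep : Gamma (x - k) = (x - (k + 1)) * Gamma (x - (k + 1)) := by
      rw [← Gamma_add_one (by linarith)]
      ring_nf
    rw [Finset.prod_range_succ _ (k + 1), ih (by linarith), hstep]
    push_cast
    ring

lemma Real.prod_range_div_sub_natCast (a x : ℝ) {k : ℕ} (hk : (k : ℝ) < x) :
    ∏ i ∈ Finset.range (k + 1), a / (x - i) = a ^ (k + 1) * Gamma (x - k) / Gamma (x + 1) := by
  rw [Finset.prod_div_distrib, Finset.prod_const, Finset.card_range,
    Gamma_add_one_eq_prod_mul_Gamma x hk,
    mul_div_mul_right _ _ (Gamma_pos_of_pos (sub_pos.2 hk)).ne']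

theorem stmt_5 (a x : ℝ) (ha : 0 < a) (hx : a ≤ x) :
    (∏ i ∈ Finset.range (⌊x - a⌋₊ + 1), a / (x - i)) ≤
        a ^ (x - a) * Real.Gamma (a + 1) / Real.Gamma (x + 1) ∧
      ((∏ i ∈ Finset.range (⌊x - a⌋₊ + 1), a / (x - i)) =
          a ^ (x - a) * Real.Gamma (a + 1) / Real.Gamma (x + 1) ↔
        ∃ n : ℤ, x - a = n) := by
  have hsplit : x - a = ⌊x - a⌋₊ + Int.fract (x - a) := by
    have h := Int.floor_add_fract (x - a)
    rw [← Int.natCast_floor_eq_floor (sub_nonneg.2 hx)] at h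
    exact_mod_cast h.symm
  have hkx : (⌊x - a⌋₊ : ℝ) < x := by linarith [Int.fract_nonneg (x - a)]
  set k := ⌊x - a⌋₊
  set f := Int.fract (x - a)
  have hC : 0 < a ^ (k + 1) / Gamma (x + 1) :=
    div_pos (by positivity) (Gamma_pos_of_pos (by linarith))
  have hlhs : ∏ i ∈ Finset.range (k + 1), a / (x - i) =
      a ^ (k + 1) / Gamma (x + 1) * Gamma (a + f) := by
    rw [prod_range_div_sub_natCast a x hkx, show x - k = a + f by linarith]
    ring
  have hrhs : a ^ (x - a) * Gamma (a + 1) / Gamma (x + 1) =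
      a ^ (k + 1) / Gamma (x + 1) * (a ^ f * Gamma a) := by
    rw [hsplit, rpow_add ha, rpow_natCast, Gamma_add_one ha.ne']
    ring
  have hint : (∃ n : ℤ, x - a = n) ↔ f = 0 := by
    rw [Int.fract_eq_zero_iff]
    simp only [mem_range, eq_comm]
  rw [hlhs, hrhs, hint, mul_le_mul_iff_right₀ hC, mul_right_inj' hC.ne']
  rcases (show 0 ≤ f from Int.fract_nonneg _).eq_or_lt with hf | hf
  · simp [← hf]
  · have hlt := Gamma_add_lt_rpow_mul_Gamma ha hf (Int.fract_lt_one _)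
    exact ⟨hlt.le, iff_of_false hlt.ne hf.ne'⟩
end

section
/- For a > 0 and 0 ≤ x ≤ a with k = ⌊a − x⌋, the product ∏_{i=1}^{k} (x+i)/a satisfies ∏_{i=1}^{k} (x+i)/a ≤ Γ(a+1)/(a^{a−x} Γ(x+1)), with equality if and only if a − x is an integer. -/
/-!
Write `a - x = k + δ` with `k = ⌊a - x⌋₊` and `0 ≤ δ < 1`. Since `Γ(x + k + 1) = Γ(x + 1) ∏ (x + i)`,
the claim reduces to Wendel's inequality `Γ(a + 1 - δ) a ^ δ ≤ Γ(a + 1)`, with equality only for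
`δ = 0`. This is log-convexity of `Γ` between `a` and `a + 1`; strictness follows by shifting to
`[a + 1, a + 2]` with `Γ(s + 1) = s Γ(s)`, where the factor `s` is strictly log-concave.
-/

open Real

namespace Real

theorem Gamma_add_lt_rpow_Gamma_mul_rpow_Gamma_add_one {s t : ℝ} (hs : 0 < s) (ht₀ : 0 < t)
    (ht₁ : t < 1) : Gamma (s + t) < Gamma s ^ (1 - t) * Gamma (s + 1) ^ t := by
  have hst : 0 < s + t := by linarith
  have hconv : Gamma (s + t + 1) ≤ Gamma (s + 1) ^ (1 - t) * Gamma (s + 1 + 1) ^ t := by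
    convert Gamma_mul_add_mul_le_rpow_Gamma_mul_rpow_Gamma (s := s + 1) (t := s + 1 + 1)
      (by linarith) (by linarith) (sub_pos.2 ht₁) ht₀ (by ring) using 2
    ring
  have hamgm : s ^ (1 - t) * (s + 1) ^ t < s + t := by
    have := (geom_mean_lt_arith_mean2_weighted_iff_of_pos (sub_pos.2 ht₁) ht₀ hs.le
      (by linarith) (by ring)).2 (by linarith : s ≠ s + 1)
    linarith
  rw [Gamma_add_one hst.ne', Gamma_add_one hs.ne', Gamma_add_one (by linarith : s + 1 ≠ 0),
    mul_rpow hs.le (Gamma_pos_of_pos hs).le,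
    mul_rpow (by linarith) (Gamma_pos_of_pos (by linarith : 0 < s + 1)).le] at hconv
  have hG : 0 < Gamma s ^ (1 - t) * Gamma (s + 1) ^ t := by
    have := Gamma_pos_of_pos hs
    have := Gamma_pos_of_pos (by linarith : 0 < s + 1)
    positivity
  refine lt_of_mul_lt_mul_left ?_ hst.le
  calc (s + t) * Gamma (s + t)
      ≤ s ^ (1 - t) * (s + 1) ^ t * (Gamma s ^ (1 - t) * Gamma (s + 1) ^ t) := by
        linarith
    _ < (s + t) * (Gamma s ^ (1 - t) * Gamma (s + 1) ^ t) := mul_lt_mul_of_pos_right hamgm hG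

theorem Gamma_add_one_sub_mul_rpow_lt {a δ : ℝ} (ha : 0 < a) (hδ₀ : 0 < δ) (hδ₁ : δ < 1) :
    Gamma (a + 1 - δ) * a ^ δ < Gamma (a + 1) := by
  have h := Gamma_add_lt_rpow_Gamma_mul_rpow_Gamma_add_one ha (t := 1 - δ) (by linarith)
    (by linarith)
  rw [sub_sub_cancel, ← add_sub_assoc] at h
  have hΓ : 0 < Gamma (a + 1) := Gamma_pos_of_pos (by linarith)
  calc Gamma (a + 1 - δ) * a ^ δ < Gamma a ^ δ * Gamma (a + 1) ^ (1 - δ) * a ^ δ :=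
        mul_lt_mul_of_pos_right h (by positivity)
    _ = (a * Gamma a) ^ δ * Gamma (a + 1) ^ (1 - δ) := by
        rw [mul_rpow ha.le (Gamma_pos_of_pos ha).le]; ring
    _ = Gamma (a + 1) := by
        rw [← Gamma_add_one ha.ne', ← rpow_add hΓ, add_sub_cancel, rpow_one]

theorem Gamma_add_one_sub_mul_rpow_le {a δ : ℝ} (ha : 0 < a) (hδ₀ : 0 ≤ δ) (hδ₁ : δ < 1) :
    Gamma (a + 1 - δ) * a ^ δ ≤ Gamma (a + 1) := by
  rcases hδ₀.eq_or_lt with rfl | hδ₀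
  · simp
  · exact (Gamma_add_one_sub_mul_rpow_lt ha hδ₀ hδ₁).le

theorem Gamma_add_one_sub_mul_rpow_eq_iff {a δ : ℝ} (ha : 0 < a) (hδ₀ : 0 ≤ δ) (hδ₁ : δ < 1) :
    Gamma (a + 1 - δ) * a ^ δ = Gamma (a + 1) ↔ δ = 0 := by
  refine ⟨fun h => ?_, by rintro rfl; simp⟩
  by_contra hne
  exact (Gamma_add_one_sub_mul_rpow_lt ha (hδ₀.lt_of_ne' hne) hδ₁).ne h

theorem Gamma_add_natCast_add_one {x : ℝ} (hx : -1 < x) (k : ℕ) :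
    Gamma (x + k + 1) = (∏ i ∈ Finset.Icc 1 k, (x + i)) * Gamma (x + 1) := by
  induction k with
  | zero => simp
  | succ k ih =>
    have hk : x + k + 1 ≠ 0 := by linarith [k.cast_nonneg (α := ℝ)]
    rw [Finset.prod_Icc_succ_top (by omega), Nat.cast_succ, ← add_assoc, Gamma_add_one hk, ih]
    ring

end Real

theorem stmt_6 (a x : ℝ) (ha : 0 < a) (hx0 : 0 ≤ x) (hxa : x ≤ a) :
    (∏ i ∈ Finset.Icc 1 ⌊a - x⌋₊, (x + i) / a) ≤
        Real.Gamma (a + 1) / (a ^ (a - x) * Real.Gamma (x + 1)) ∧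
      ((∏ i ∈ Finset.Icc 1 ⌊a - x⌋₊, (x + i) / a) =
          Real.Gamma (a + 1) / (a ^ (a - x) * Real.Gamma (x + 1)) ↔
        ∃ n : ℤ, a - x = n) := by
  set k := ⌊a - x⌋₊
  set δ := Int.fract (a - x)
  have hkδ : (k : ℝ) + δ = a - x := by
    rw [natCast_floor_eq_intCast_floor (by linarith), Int.floor_add_fract]
  have hD : 0 < a ^ (a - x) * Gamma (x + 1) :=
    mul_pos (rpow_pos_of_pos ha _) (Gamma_pos_of_pos (by linarith))
  have hprod : ∏ i ∈ Finset.Icc 1 k, (x + i) / a =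
      Gamma (a + 1 - δ) * a ^ δ / (a ^ (a - x) * Gamma (x + 1)) := by
    rw [Finset.prod_div_distrib, Finset.prod_const, Nat.card_Icc, Nat.add_sub_cancel, ← hkδ,
      rpow_add ha, rpow_natCast, show a + 1 - δ = x + k + 1 by linarith,
      Gamma_add_natCast_add_one (by linarith)]
    field_simp
  rw [hprod, div_left_inj' hD.ne', Gamma_add_one_sub_mul_rpow_eq_iff ha (Int.fract_nonneg _)
    (Int.fract_lt_one _), Int.fract_eq_zero_iff]
  exact ⟨div_le_div_of_nonneg_right
    (Gamma_add_one_sub_mul_rpow_le ha (Int.fract_nonneg _) (Int.fract_lt_one _)) hD.le,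
    by simp [eq_comm]⟩
end

section
/- Suppose X ≥ 0 with mean a ∈ (0,∞) admits a c-bounded size bias coupling (Y = X* and Y ≤ X + c a.s.). Then for every β ∈ ℝ, E[e^{βX}] < ∞. -/
open MeasureTheory Real
open scoped Nat

/-! Testing g = 1_{[t,∞)} in the size-bias identity gives `t P(X ≥ t) ≤ E[X; X ≥ t] = a P(Y ≥ t)`,
and the coupling `Y ≤ X + c` turns this into `t P(X ≥ t) ≤ a P(X ≥ t - c)`. Iterating along
`t = c, 2c, 3c, …` yields `P(X ≥ n c) ≤ (a/c)^n / n!`, a tail decaying faster than any exponential,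
so summing `exp(β X)` over the slabs `n c ≤ X < (n + 1) c` converges for every `β`. -/

theorem le_pow_div_factorial_of_succ_mul_le {p : ℕ → ℝ} {r : ℝ} (hr : 0 ≤ r) (h0 : p 0 ≤ 1)
    (hsucc : ∀ n : ℕ, (n + 1) * p (n + 1) ≤ r * p n) (n : ℕ) : p n ≤ r ^ n / n ! := by
  induction n with
  | zero => simpa using h0
  | succ n ih =>
    rw [le_div_iff₀ (by positivity), Nat.factorial_succ, Nat.cast_mul, Nat.cast_succ]
    calc p (n + 1) * ((n + 1) * n !) = (n + 1) * p (n + 1) * n ! := by ring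
      _ ≤ r * p n * n ! := mul_le_mul_of_nonneg_right (hsucc n) (by positivity)
      _ ≤ r * (r ^ n / n !) * n ! := by gcongr
      _ = r ^ (n + 1) := by field_simp; ring

section ExpMoment

variable {Ω : Type*} [MeasurableSpace Ω] {μ : Measure Ω} {X : Ω → ℝ} {c : ℝ}

theorem lintegral_exp_mul_le_tsum (hXm : Measurable X) (hXnn : ∀ᵐ ω ∂μ, 0 ≤ X ω) (hc : 0 < c)
    {β : ℝ} (hβ : 0 ≤ β) :
    ∫⁻ ω, ENNReal.ofReal (exp (β * X ω)) ∂μ ≤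
      ∑' n : ℕ, ENNReal.ofReal (exp (β * ((n + 1) * c))) * μ {ω | n * c ≤ X ω} := by
  have hmeas (n : ℕ) : MeasurableSet {ω | n * c ≤ X ω} := measurableSet_le measurable_const hXm
  calc ∫⁻ ω, ENNReal.ofReal (exp (β * X ω)) ∂μ
      ≤ ∫⁻ ω, ∑' n : ℕ,
          {ω | n * c ≤ X ω}.indicator (fun _ ↦ ENNReal.ofReal (exp (β * ((n + 1) * c)))) ω ∂μ := by
        refine lintegral_mono_ae ?_
        filter_upwards [hXnn] with ω hω
        -- the term of the slab containing `X ω` already dominates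
        set n := ⌊X ω / c⌋₊
        have hlow : n * c ≤ X ω := (le_div_iff₀ hc).1 (Nat.floor_le (div_nonneg hω hc.le))
        have hupp : X ω < (n + 1) * c := (div_lt_iff₀ hc).1 (Nat.lt_floor_add_one _)
        refine le_trans ?_ (ENNReal.le_tsum n)
        rw [Set.indicator_of_mem (show ω ∈ {ω | n * c ≤ X ω} from hlow)]
        exact ENNReal.ofReal_le_ofReal (exp_le_exp.2 (by gcongr))
    _ = ∑' n : ℕ, ENNReal.ofReal (exp (β * ((n + 1) * c))) * μ {ω | n * c ≤ X ω} := by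
        rw [lintegral_tsum fun n ↦ (measurable_const.indicator (hmeas n)).aemeasurable]
        simp_rw [lintegral_indicator_const (hmeas _)]

theorem lintegral_exp_mul_lt_top_of_measure_le_pow_div_factorial (hXm : Measurable X)
    (hXnn : ∀ᵐ ω ∂μ, 0 ≤ X ω) (hc : 0 < c) {r : ℝ} (hr : 0 ≤ r)
    (htail : ∀ n : ℕ, μ {ω | n * c ≤ X ω} ≤ ENNReal.ofReal (r ^ n / n !)) {β : ℝ} (hβ : 0 ≤ β) :
    ∫⁻ ω, ENNReal.ofReal (exp (β * X ω)) ∂μ < ⊤ := by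
  set u : ℕ → ℝ := fun n ↦ exp (β * c) * ((exp (β * c) * r) ^ n / n !)
  have hu : Summable u := (summable_pow_div_factorial _).mul_left _
  have hterm (n : ℕ) :
      ENNReal.ofReal (exp (β * ((n + 1) * c))) * μ {ω | n * c ≤ X ω} ≤ ENNReal.ofReal (u n) := by
    have hexp : exp (β * ((n + 1) * c)) = exp (β * c) * exp (β * c) ^ n := by
      rw [← exp_nat_mul, ← exp_add]; ring_nf
    calc ENNReal.ofReal (exp (β * ((n + 1) * c))) * μ {ω | n * c ≤ X ω}
        ≤ ENNReal.ofReal (exp (β * ((n + 1) * c))) * ENNReal.ofReal (r ^ n / n !) := by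
          gcongr; exact htail n
      _ = ENNReal.ofReal (u n) := by
          rw [← ENNReal.ofReal_mul (exp_pos _).le, hexp]
          congr 1
          simp only [u]
          ring
  calc ∫⁻ ω, ENNReal.ofReal (exp (β * X ω)) ∂μ
      ≤ ∑' n : ℕ, ENNReal.ofReal (exp (β * ((n + 1) * c))) * μ {ω | n * c ≤ X ω} :=
        lintegral_exp_mul_le_tsum hXm hXnn hc hβ
    _ ≤ ∑' n, ENNReal.ofReal (u n) := ENNReal.tsum_le_tsum hterm
    _ = ENNReal.ofReal (∑' n, u n) := (ENNReal.ofReal_tsum_of_nonneg (fun n ↦ by positivity) hu).symm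
    _ < ⊤ := ENNReal.ofReal_lt_top

theorem integrable_exp_mul_of_measure_le_pow_div_factorial (hXm : Measurable X)
    (hXnn : ∀ᵐ ω ∂μ, 0 ≤ X ω) (hc : 0 < c) {r : ℝ} (hr : 0 ≤ r)
    (htail : ∀ n : ℕ, μ {ω | n * c ≤ X ω} ≤ ENNReal.ofReal (r ^ n / n !)) (β : ℝ) :
    Integrable (fun ω ↦ exp (β * X ω)) μ := by
  have hmeas (β : ℝ) : AEStronglyMeasurable (fun ω ↦ exp (β * X ω)) μ := by fun_prop
  have habs : Integrable (fun ω ↦ exp (|β| * X ω)) μ :=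
    ⟨hmeas _, (hasFiniteIntegral_iff_ofReal (ae_of_all _ fun _ ↦ (exp_pos _).le)).2
      (lintegral_exp_mul_lt_top_of_measure_le_pow_div_factorial hXm hXnn hc hr htail (abs_nonneg β))⟩
  refine habs.mono' (hmeas β) ?_
  filter_upwards [hXnn] with ω hω
  rw [norm_of_nonneg (exp_pos _).le]
  exact exp_le_exp.2 (mul_le_mul_of_nonneg_right (le_abs_self β) hω)

end ExpMoment

section SizeBias

variable {Ω : Type*} [MeasurableSpace Ω] {μ : Measure Ω} {X Y : Ω → ℝ} {a c : ℝ}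

theorem mul_measureReal_le_of_sizeBias [IsFiniteMeasure μ] (ha : 0 < a) (hXm : Measurable X)
    (hXint : Integrable X μ)
    (hsb : ∀ g : ℝ → ℝ, Measurable g → (∃ C, ∀ x, |g x| ≤ C) →
        ∫ ω, g (Y ω) ∂μ = (∫ ω, X ω * g (X ω) ∂μ) / a)
    (hcoup : ∀ᵐ ω ∂μ, Y ω ≤ X ω + c) (t : ℝ) :
    t * μ.real {ω | t ≤ X ω} ≤ a * μ.real {ω | t - c ≤ X ω} := by
  set g : ℝ → ℝ := (Set.Ici t).indicator 1
  have hg : Measurable g := measurable_const.indicator measurableSet_Ici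
  have hgb : ∃ C, ∀ x, |g x| ≤ C :=
    ⟨1, fun x ↦ by by_cases hx : t ≤ x <;> simp [g, hx]⟩
  have hset : MeasurableSet {ω | t ≤ X ω} := measurableSet_le measurable_const hXm
  have hset' : MeasurableSet {ω | t - c ≤ X ω} := measurableSet_le measurable_const hXm
  have hXg : (fun ω ↦ X ω * g (X ω)) = {ω | t ≤ X ω}.indicator X := by
    ext ω; by_cases hω : t ≤ X ω <;> simp [g, hω]
  have hgY : (fun ω ↦ g (Y ω)) ≤ᵐ[μ] {ω | t - c ≤ X ω}.indicator 1 := by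
    filter_upwards [hcoup] with ω hω
    by_cases hY : t ≤ Y ω
    · have hX : ω ∈ {ω | t - c ≤ X ω} := show t - c ≤ X ω by linarith
      simp only [g, Set.indicator_of_mem (show Y ω ∈ Set.Ici t from hY), Set.indicator_of_mem hX,
        Pi.one_apply, le_refl]
    · simp only [g, Set.indicator_of_notMem (show Y ω ∉ Set.Ici t from hY)]
      exact Set.indicator_nonneg (fun _ _ ↦ zero_le_one) ω
  calc t * μ.real {ω | t ≤ X ω} ≤ ∫ ω in {ω | t ≤ X ω}, X ω ∂μ :=
        setIntegral_ge_of_const_le_real hset (measure_ne_top μ _) (fun _ h ↦ h) hXint.integrableOn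
    _ = a * ∫ ω, g (Y ω) ∂μ := by
        rw [hsb g hg hgb, hXg, integral_indicator hset]; field_simp
    _ ≤ a * μ.real {ω | t - c ≤ X ω} := by
        gcongr
        rw [← integral_indicator_one hset']
        refine integral_mono_of_nonneg (ae_of_all _ fun ω ↦ ?_) ?_ hgY
        · exact Set.indicator_nonneg (fun _ _ ↦ zero_le_one) _
        · exact (integrable_const 1).indicator hset'

theorem measureReal_le_pow_div_factorial_of_sizeBias [IsProbabilityMeasure μ] (ha : 0 < a)
    (hc : 0 < c) (hXm : Measurable X) (hXint : Integrable X μ)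
    (hsb : ∀ g : ℝ → ℝ, Measurable g → (∃ C, ∀ x, |g x| ≤ C) →
        ∫ ω, g (Y ω) ∂μ = (∫ ω, X ω * g (X ω) ∂μ) / a)
    (hcoup : ∀ᵐ ω ∂μ, Y ω ≤ X ω + c) (n : ℕ) :
    μ.real {ω | n * c ≤ X ω} ≤ (a / c) ^ n / n ! := by
  refine le_pow_div_factorial_of_succ_mul_le (p := fun n : ℕ ↦ μ.real {ω | n * c ≤ X ω})
    (div_nonneg ha.le hc.le) measureReal_le_one (fun n ↦ ?_) n
  have h := mul_measureReal_le_of_sizeBias ha hXm hXint hsb hcoup ((n + 1) * c)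
  rw [show ((n : ℝ) + 1) * c - c = n * c by ring] at h
  rw [div_mul_eq_mul_div, le_div_iff₀ hc]
  push_cast
  linarith

end SizeBias

theorem stmt_7_general
    {Ω : Type*} [MeasurableSpace Ω] (μ : Measure Ω) [IsProbabilityMeasure μ]
    (X Y : Ω → ℝ) (a c : ℝ) (ha : 0 < a) (hc : 0 < c)
    (hXm : Measurable X)
    (hXnn : ∀ᵐ ω ∂μ, 0 ≤ X ω)
    (hXint : Integrable X μ)
    (hsb : ∀ g : ℝ → ℝ, Measurable g → (∃ C, ∀ x, |g x| ≤ C) →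
        ∫ ω, g (Y ω) ∂μ = (∫ ω, X ω * g (X ω) ∂μ) / a)
    (hcoup : ∀ᵐ ω ∂μ, Y ω ≤ X ω + c) :
    ∀ β : ℝ, Integrable (fun ω => Real.exp (β * X ω)) μ := by
  refine integrable_exp_mul_of_measure_le_pow_div_factorial hXm hXnn hc (div_nonneg ha.le hc.le)
    fun n ↦ ?_
  rw [← ofReal_measureReal]
  exact ENNReal.ofReal_le_ofReal
    (measureReal_le_pow_div_factorial_of_sizeBias ha hc hXm hXint hsb hcoup n)

theorem stmt_7
    {Ω : Type*} [MeasurableSpace Ω] (μ : Measure Ω) [IsProbabilityMeasure μ]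
    (X Y : Ω → ℝ) (a c : ℝ) (ha : 0 < a) (hc : 0 < c)
    (hXm : Measurable X) (hYm : Measurable Y)
    (hXnn : ∀ᵐ ω ∂μ, 0 ≤ X ω)
    (hXint : Integrable X μ)
    (hmean : ∫ ω, X ω ∂μ = a)
    (hsb : ∀ g : ℝ → ℝ, Measurable g → (∃ C, ∀ x, |g x| ≤ C) →
        ∫ ω, g (Y ω) ∂μ = (∫ ω, X ω * g (X ω) ∂μ) / a)
    (hcoup : ∀ᵐ ω ∂μ, Y ω ≤ X ω + c) :
    ∀ β : ℝ, Integrable (fun ω => Real.exp (β * X ω)) μ :=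
  stmt_7_general μ X Y a c ha hc hXm hXnn hXint hsb hcoup
end

section
/- Suppose X ≥ 0 with mean a ∈ (0,∞) admits a c-bounded size bias coupling. Then for all β ∈ ℝ, log E[e^{βX}] ≤ (a/c)(e^{βc} − 1). -/
/-!
Differentiating `M(β) = E[e^{βX}]` gives `M'(β) = E[X e^{βX}] = a E[e^{βY}]`, and `Y ≤ X + c`
makes `E[e^{βY}] ≤ e^{βc} M(β)` for `β ≥ 0`, with the reverse inequality for `β ≤ 0`. Hence the
derivative of `(a/c)(e^{βc} - 1) - log M(β)`, a function vanishing at `0`, has the sign of `β`,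
so `0` is its minimum. Finiteness of `M` comes from the same comparison applied to the
truncations `e^{β min(X, K)}`, whose expectations are bounded uniformly in `K`.
-/

open MeasureTheory ProbabilityTheory Real Filter Topology

lemma tendsto_min_natCast (r : ℝ) : Tendsto (fun n : ℕ => min r n) atTop (𝓝 r) :=
  tendsto_const_nhds.congr' <| (eventually_ge_atTop ⌈r⌉₊).mono fun _ hn =>
    (min_eq_left ((Nat.le_ceil r).trans (Nat.cast_le.mpr hn))).symm

lemma mul_sub_exp_mul_nonneg {y z : ℝ} (t : ℝ) (h : y ≤ z) :
    0 ≤ t * (exp (t * z) - exp (t * y)) := by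
  rcases le_total 0 t with ht | ht
  · exact mul_nonneg ht (sub_nonneg.2 (exp_le_exp.2 (mul_le_mul_of_nonneg_left h ht)))
  · exact mul_nonneg_of_nonpos_of_nonpos ht
      (sub_nonpos.2 (exp_le_exp.2 (mul_le_mul_of_nonpos_left h ht)))

lemma apply_zero_le_of_mul_deriv_nonneg {f f' : ℝ → ℝ} (hf : ∀ t, HasDerivAt f (f' t) t)
    (hf' : ∀ t, 0 ≤ t * f' t) (x : ℝ) : f 0 ≤ f x := by
  have hcont : Continuous f := continuous_iff_continuousAt.2 fun t => (hf t).continuousAt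
  rcases le_total 0 x with hx | hx
  · refine monotoneOn_of_hasDerivWithinAt_nonneg (convex_Ici 0) hcont.continuousOn
      (fun t _ => (hf t).hasDerivWithinAt) (fun t ht => ?_) Set.self_mem_Ici hx hx
    rw [interior_Ici] at ht
    exact (mul_nonneg_iff_of_pos_left ht).1 (hf' t)
  · refine antitoneOn_of_hasDerivWithinAt_nonpos (convex_Iic 0) hcont.continuousOn
      (fun t _ => (hf t).hasDerivWithinAt) (fun t ht => ?_) hx Set.self_mem_Iic hx
    rw [interior_Iic] at ht
    exact nonpos_of_mul_nonneg_right (hf' t) ht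

section Integral

variable {Ω : Type*} [MeasurableSpace Ω] {μ : Measure Ω}

lemma integrable_of_monotone_of_integral_le {f : ℕ → Ω → ℝ} {F : Ω → ℝ} {C : ℝ}
    (hF : AEStronglyMeasurable F μ) (hf : ∀ n, Integrable (f n) μ) (hf0 : ∀ n, 0 ≤ᵐ[μ] f n)
    (hmono : ∀ᵐ x ∂μ, Monotone fun n => f n x)
    (hlim : ∀ᵐ x ∂μ, Tendsto (fun n => f n x) atTop (𝓝 (F x)))
    (hC : ∀ n, ∫ x, f n x ∂μ ≤ C) : Integrable F μ := by
  have hF0 : 0 ≤ᵐ[μ] F := by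
    filter_upwards [hf0 0, hmono, hlim] with x h0 hx hxF
    exact h0.trans (hx.ge_of_tendsto hxF 0)
  refine ⟨hF, (hasFiniteIntegral_iff_ofReal hF0).2
    (lt_of_le_of_lt (b := ENNReal.ofReal C) ?_ ENNReal.ofReal_lt_top)⟩
  refine le_of_tendsto' (lintegral_tendsto_of_tendsto_of_monotone
    (fun n => (hf n).aemeasurable.ennreal_ofReal) ?_ ?_) fun n => ?_
  · filter_upwards [hmono] with x hx using fun _ _ h => ENNReal.ofReal_le_ofReal (hx h)
  · filter_upwards [hlim] with x hx using (ENNReal.continuous_ofReal.tendsto _).comp hx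
  · rw [← ofReal_integral_eq_lintegral_ofReal (hf n) (hf0 n)]
    exact ENNReal.ofReal_le_ofReal (hC n)

lemma mul_sub_mgf_nonneg_of_le_add {X Y : Ω → ℝ} {c t : ℝ} (hcoup : ∀ᵐ ω ∂μ, Y ω ≤ X ω + c)
    (hX : Integrable (fun ω => exp (t * X ω)) μ) (hY : Integrable (fun ω => exp (t * Y ω)) μ) :
    0 ≤ t * (exp (t * c) * mgf X μ t - mgf Y μ t) := by
  rw [mgf, mgf, ← integral_const_mul, ← integral_sub (hX.const_mul _) hY, ← integral_const_mul]
  refine integral_nonneg_of_ae ?_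
  filter_upwards [hcoup] with ω hω
  simpa only [Pi.zero_apply, mul_add, exp_add, mul_comm (exp (t * c))] using
    mul_sub_exp_mul_nonneg t hω

end Integral

def IsSizeBiased {Ω : Type*} [MeasurableSpace Ω] (μ : Measure Ω) (X Y : Ω → ℝ) (a : ℝ) : Prop :=
  ∀ g : ℝ → ℝ, Measurable g → (∃ C, ∀ x, |g x| ≤ C) →
    ∫ ω, g (Y ω) ∂μ = (∫ ω, X ω * g (X ω) ∂μ) / a

namespace IsSizeBiased

variable {Ω : Type*} [MeasurableSpace Ω] {μ : Measure Ω} [IsProbabilityMeasure μ]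
  {X Y : Ω → ℝ} {a c : ℝ} {g : ℝ → ℝ}

lemma ofReal_mul_lintegral_comp (h : IsSizeBiased μ X Y a) (ha : 0 < a) (hXm : Measurable X)
    (hYm : Measurable Y) (hX0 : 0 ≤ᵐ[μ] X) (hXint : Integrable X μ) (hg : Measurable g)
    (hg0 : ∀ x, 0 ≤ g x) :
    ENNReal.ofReal a * ∫⁻ ω, ENNReal.ofReal (g (Y ω)) ∂μ
      = ∫⁻ ω, ENNReal.ofReal (X ω * g (X ω)) ∂μ := by
  have htrunc (n : ℕ) : ENNReal.ofReal a * ∫⁻ ω, ENNReal.ofReal (min (g (Y ω)) n) ∂μ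
      = ∫⁻ ω, ENNReal.ofReal (X ω * min (g (X ω)) n) ∂μ := by
    have hgnm : Measurable fun x => min (g x) n := hg.min measurable_const
    have hbdd (x : ℝ) : |min (g x) n| ≤ n :=
      abs_le.2 ⟨by linarith [le_min (hg0 x) n.cast_nonneg], min_le_right _ _⟩
    have hbdd' (x : ℝ) : ‖min (g x) n‖ ≤ n := (Real.norm_eq_abs _).trans_le (hbdd x)
    have hYint : Integrable (fun ω => min (g (Y ω)) n) μ :=
      .of_bound (hgnm.comp hYm).aestronglyMeasurable _ (ae_of_all _ fun ω => hbdd' (Y ω))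
    have hXint' : Integrable (fun ω => X ω * min (g (X ω)) n) μ :=
      hXint.mul_bdd (hgnm.comp hXm).aestronglyMeasurable (ae_of_all _ fun ω => hbdd' (X ω))
    rw [← ofReal_integral_eq_lintegral_ofReal hYint
        (ae_of_all _ fun ω => le_min (hg0 _) n.cast_nonneg),
      ← ofReal_integral_eq_lintegral_ofReal hXint'
        (hX0.mono fun ω hω => mul_nonneg hω (le_min (hg0 _) n.cast_nonneg)),
      ← ENNReal.ofReal_mul ha.le, h _ hgnm ⟨n, hbdd⟩, mul_div_cancel₀ _ ha.ne']
  have hlimY : Tendsto (fun n : ℕ => ∫⁻ ω, ENNReal.ofReal (min (g (Y ω)) n) ∂μ) atTop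
      (𝓝 (∫⁻ ω, ENNReal.ofReal (g (Y ω)) ∂μ)) := by
    refine lintegral_tendsto_of_tendsto_of_monotone
      (fun n => ((hg.min measurable_const).comp hYm).ennreal_ofReal.aemeasurable) ?_ ?_
    · exact ae_of_all _ fun ω m n hmn => ENNReal.ofReal_le_ofReal
        (min_le_min_left _ (Nat.cast_le.2 hmn))
    · exact ae_of_all _ fun ω =>
        (ENNReal.continuous_ofReal.tendsto _).comp (tendsto_min_natCast _)
  have hlimX : Tendsto (fun n : ℕ => ∫⁻ ω, ENNReal.ofReal (X ω * min (g (X ω)) n) ∂μ) atTop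
      (𝓝 (∫⁻ ω, ENNReal.ofReal (X ω * g (X ω)) ∂μ)) := by
    refine lintegral_tendsto_of_tendsto_of_monotone
      (fun n => (hXm.mul ((hg.min measurable_const).comp hXm)).ennreal_ofReal.aemeasurable) ?_ ?_
    · filter_upwards [hX0] with ω hω using fun m n hmn => ENNReal.ofReal_le_ofReal
        (mul_le_mul_of_nonneg_left (min_le_min_left _ (Nat.cast_le.2 hmn)) hω)
    · exact ae_of_all _ fun ω =>
        (ENNReal.continuous_ofReal.tendsto _).comp ((tendsto_min_natCast _).const_mul _)
  exact tendsto_nhds_unique (ENNReal.Tendsto.const_mul hlimY (Or.inr ENNReal.ofReal_ne_top))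
    (hlimX.congr fun n => (htrunc n).symm)

lemma mul_integral_comp (h : IsSizeBiased μ X Y a) (ha : 0 < a) (hXm : Measurable X)
    (hYm : Measurable Y) (hX0 : 0 ≤ᵐ[μ] X) (hXint : Integrable X μ) (hg : Measurable g)
    (hg0 : ∀ x, 0 ≤ g x) :
    a * ∫ ω, g (Y ω) ∂μ = ∫ ω, X ω * g (X ω) ∂μ := by
  rw [integral_eq_lintegral_of_nonneg_ae (ae_of_all _ fun ω => hg0 _)
      (hg.comp hYm).aestronglyMeasurable,
    integral_eq_lintegral_of_nonneg_ae (hX0.mono fun ω hω => mul_nonneg hω (hg0 _))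
      (hXm.mul (hg.comp hXm)).aestronglyMeasurable,
    ← h.ofReal_mul_lintegral_comp ha hXm hYm hX0 hXint hg hg0, ENNReal.toReal_mul,
    ENNReal.toReal_ofReal ha.le]

lemma integrable_comp (h : IsSizeBiased μ X Y a) (ha : 0 < a) (hXm : Measurable X)
    (hYm : Measurable Y) (hX0 : 0 ≤ᵐ[μ] X) (hXint : Integrable X μ) (hg : Measurable g)
    (hg0 : ∀ x, 0 ≤ g x) (hgX : Integrable (fun ω => X ω * g (X ω)) μ) :
    Integrable (fun ω => g (Y ω)) μ := by
  refine ⟨(hg.comp hYm).aestronglyMeasurable,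
    (hasFiniteIntegral_iff_ofReal (ae_of_all _ fun ω => hg0 _)).2 ?_⟩
  refine ENNReal.lt_top_of_mul_ne_top_right ?_ (ENNReal.ofReal_pos.2 ha).ne'
  rw [h.ofReal_mul_lintegral_comp ha hXm hYm hX0 hXint hg hg0]
  exact hgX.lintegral_lt_top.ne

/-- Markov-type split at the level `t := 2 a e^{βc}`: where `X ≤ t` the integrand is at most
`e^{βt}`, elsewhere at most `X g(X) / t`, and `E[X g(X)] = a E[g(Y)] ≤ a e^{βc} E[g(X)]`. -/
lemma integral_exp_mul_min_le (h : IsSizeBiased μ X Y a) (ha : 0 < a) (hc : 0 ≤ c)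
    (hXm : Measurable X) (hYm : Measurable Y) (hX0 : 0 ≤ᵐ[μ] X) (hXint : Integrable X μ)
    (hcoup : ∀ᵐ ω ∂μ, Y ω ≤ X ω + c) {β : ℝ} (hβ : 0 < β) (K : ℝ) :
    ∫ ω, exp (β * min (X ω) K) ∂μ ≤ 2 * exp (β * (2 * a * exp (β * c))) := by
  set t := 2 * a * exp (β * c) with ht_def
  have ht : 0 < t := by positivity
  set g : ℝ → ℝ := fun x => exp (β * min x K)
  have hgm : Measurable g := ((measurable_id.min measurable_const).const_mul β).exp
  have hbdd (x : ℝ) : ‖g x‖ ≤ exp (β * K) := by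
    rw [Real.norm_of_nonneg (exp_pos _).le, exp_le_exp]
    exact mul_le_mul_of_nonneg_left (min_le_right _ _) hβ.le
  have hgX : Integrable (fun ω => g (X ω)) μ :=
    .of_bound (hgm.comp hXm).aestronglyMeasurable _ (ae_of_all _ fun ω => hbdd _)
  have hgY : Integrable (fun ω => g (Y ω)) μ :=
    .of_bound (hgm.comp hYm).aestronglyMeasurable _ (ae_of_all _ fun ω => hbdd _)
  have hXgX : Integrable (fun ω => X ω * g (X ω)) μ :=
    hXint.mul_bdd (hgm.comp hXm).aestronglyMeasurable (ae_of_all _ fun ω => hbdd _)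
  have hid := h.mul_integral_comp ha hXm hYm hX0 hXint hgm fun x => (exp_pos _).le
  have hY_le : ∫ ω, g (Y ω) ∂μ ≤ exp (β * c) * ∫ ω, g (X ω) ∂μ := by
    rw [← integral_const_mul]
    refine integral_mono_ae hgY (hgX.const_mul _) ?_
    filter_upwards [hcoup] with ω hω
    rw [← exp_add, exp_le_exp, ← mul_add]
    refine mul_le_mul_of_nonneg_left ?_ hβ.le
    calc min (Y ω) K ≤ min (X ω + c) (K + c) := min_le_min hω (by linarith)
      _ = min (X ω) K + c := min_add_add_right _ _ _
      _ = c + min (X ω) K := add_comm _ _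
  have hsplit : ∫ ω, g (X ω) ∂μ ≤ exp (β * t) + (∫ ω, X ω * g (X ω) ∂μ) / t := by
    have hpt : ∀ᵐ ω ∂μ, g (X ω) ≤ exp (β * t) + X ω * g (X ω) / t := by
      filter_upwards [hX0] with ω hω
      have hg0 : 0 < g (X ω) := exp_pos _
      rcases le_total (X ω) t with hXt | htX
      · have : g (X ω) ≤ exp (β * t) :=
          exp_le_exp.2 (mul_le_mul_of_nonneg_left ((min_le_left _ _).trans hXt) hβ.le)
        linarith [div_nonneg (mul_nonneg hω hg0.le) ht.le]
      · have : g (X ω) ≤ X ω * g (X ω) / t := by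
          rw [le_div_iff₀ ht]
          nlinarith
        linarith [exp_pos (β * t)]
    calc ∫ ω, g (X ω) ∂μ ≤ ∫ ω, (exp (β * t) + X ω * g (X ω) / t) ∂μ :=
          integral_mono_ae hgX ((integrable_const _).add (hXgX.div_const t)) hpt
      _ = exp (β * t) + (∫ ω, X ω * g (X ω) ∂μ) / t := by
          rw [integral_add (integrable_const _) (hXgX.div_const t), integral_const,
            integral_div, probReal_univ, one_smul]
  have hhalf : (∫ ω, X ω * g (X ω) ∂μ) / t ≤ (∫ ω, g (X ω) ∂μ) / 2 := by
    rw [← hid, div_le_div_iff₀ ht two_pos, ht_def]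
    nlinarith [mul_le_mul_of_nonneg_left hY_le ha.le]
  linarith

lemma integrable_exp_mul (h : IsSizeBiased μ X Y a) (ha : 0 < a) (hc : 0 ≤ c)
    (hXm : Measurable X) (hYm : Measurable Y) (hX0 : 0 ≤ᵐ[μ] X) (hXint : Integrable X μ)
    (hcoup : ∀ᵐ ω ∂μ, Y ω ≤ X ω + c) (β : ℝ) :
    Integrable (fun ω => exp (β * X ω)) μ := by
  have hmeas : Measurable fun ω => exp (β * X ω) := (hXm.const_mul β).exp
  rcases le_or_gt β 0 with hβ | hβ
  · refine .of_bound hmeas.aestronglyMeasurable 1 ?_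
    filter_upwards [hX0] with ω hω
    rw [Real.norm_of_nonneg (exp_pos _).le, exp_le_one_iff]
    exact mul_nonpos_of_nonpos_of_nonneg hβ hω
  refine integrable_of_monotone_of_integral_le hmeas.aestronglyMeasurable
    (f := fun (n : ℕ) ω => exp (β * min (X ω) n)) (fun n => ?_)
    (fun n => ae_of_all _ fun ω => (exp_pos _).le)
    (ae_of_all _ fun ω m n hmn => exp_le_exp.2 <|
      mul_le_mul_of_nonneg_left (min_le_min_left _ (Nat.cast_le.2 hmn)) hβ.le)
    (ae_of_all _ fun ω => (continuous_exp.tendsto _).comp ((tendsto_min_natCast _).const_mul β))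
    fun n => h.integral_exp_mul_min_le ha hc hXm hYm hX0 hXint hcoup hβ n
  refine .of_bound (((hXm.min measurable_const).const_mul β).exp.aestronglyMeasurable)
    (exp (β * n)) (ae_of_all _ fun ω => ?_)
  rw [Real.norm_of_nonneg (exp_pos _).le, exp_le_exp]
  exact mul_le_mul_of_nonneg_left (min_le_right _ _) hβ.le

end IsSizeBiased

theorem stmt_8_general
    {Ω : Type*} [MeasurableSpace Ω] (μ : Measure Ω) [IsProbabilityMeasure μ]
    (X Y : Ω → ℝ) (a c : ℝ) (ha : 0 < a) (hc : 0 < c)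
    (hXm : Measurable X) (hYm : Measurable Y)
    (hXnn : ∀ᵐ ω ∂μ, 0 ≤ X ω)
    (hXint : Integrable X μ)
    (hsb : ∀ g : ℝ → ℝ, Measurable g → (∃ C, ∀ x, |g x| ≤ C) →
        ∫ ω, g (Y ω) ∂μ = (∫ ω, X ω * g (X ω) ∂μ) / a)
    (hcoup : ∀ᵐ ω ∂μ, Y ω ≤ X ω + c) :
    ∀ β : ℝ,
      Real.log (∫ ω, Real.exp (β * X ω) ∂μ) ≤ (a / c) * (Real.exp (β * c) - 1) := by
  have hsb : IsSizeBiased μ X Y a := hsb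
  have hX t : Integrable (fun ω => exp (t * X ω)) μ :=
    hsb.integrable_exp_mul ha hc.le hXm hYm hXnn hXint hcoup t
  have hint t : t ∈ interior (integrableExpSet X μ) := by
    simp [integrableExpSet, hX]
  have hexp t : Measurable fun x => exp (t * x) := (measurable_const_mul t).exp
  have hid t : a * mgf Y μ t = ∫ ω, X ω * exp (t * X ω) ∂μ :=
    hsb.mul_integral_comp ha hXm hYm hXnn hXint (hexp t) fun _ => (exp_pos _).le
  have hY t : Integrable (fun ω => exp (t * Y ω)) μ :=
    hsb.integrable_comp ha hXm hYm hXnn hXint (hexp t) (fun _ => (exp_pos _).le) <| by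
      simpa using integrable_pow_mul_exp_of_mem_interior_integrableExpSet (hint t) 1
  have hderiv t : HasDerivAt (fun t => a / c * (exp (t * c) - 1) - cgf X μ t)
      (a / mgf X μ t * (exp (t * c) * mgf X μ t - mgf Y μ t)) t := by
    refine ((((hasDerivAt_mul_const c).exp.sub_const 1).const_mul (a / c)).sub
      ((hasDerivAt_mgf (hint t)).log (mgf_pos (hX t)).ne')).congr_deriv ?_
    rw [← hid]
    field_simp [(mgf_pos (hX t)).ne']
  intro β
  simpa [cgf, mgf] using apply_zero_le_of_mul_deriv_nonneg hderiv (fun t => by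
    rw [mul_left_comm]
    exact mul_nonneg (div_nonneg ha.le (mgf_pos (hX t)).le)
      (mul_sub_mgf_nonneg_of_le_add hcoup (hX t) (hY t))) β

theorem stmt_8
    {Ω : Type*} [MeasurableSpace Ω] (μ : Measure Ω) [IsProbabilityMeasure μ]
    (X Y : Ω → ℝ) (a c : ℝ) (ha : 0 < a) (hc : 0 < c)
    (hXm : Measurable X) (hYm : Measurable Y)
    (hXnn : ∀ᵐ ω ∂μ, 0 ≤ X ω)
    (hXint : Integrable X μ)
    (hmean : ∫ ω, X ω ∂μ = a)
    (hsb : ∀ g : ℝ → ℝ, Measurable g → (∃ C, ∀ x, |g x| ≤ C) →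
        ∫ ω, g (Y ω) ∂μ = (∫ ω, X ω * g (X ω) ∂μ) / a)
    (hcoup : ∀ᵐ ω ∂μ, Y ω ≤ X ω + c) :
    ∀ β : ℝ,
      Real.log (∫ ω, Real.exp (β * X ω) ∂μ) ≤ (a / c) * (Real.exp (β * c) - 1) :=
  stmt_8_general μ X Y a c ha hc hXm hYm hXnn hXint hsb hcoup
end

section
/- Suppose X ≥ 0 with mean a ∈ (0,∞) admits a c-bounded size bias coupling. Then for all x ≥ a, P(X ≥ x) ≤ (a/x)^{x/c} e^{(x−a)/c}. -/
open MeasureTheory Real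

/-! Work with the truncated moment generating function `F θ = E min(e^{θX}, M)`, which is finite
without any integrability assumption on `e^{θX}`. Size biasing gives `E[X g(X)] = a E[g(Y)]`,
and the coupling `Y ≤ X + c` then gives `E[X min(e^{θX}, M)] ≤ a e^{cθ} F θ`. Since
`θ ↦ min(e^{θx}, M)` grows at rate at most `x min(e^{θx}, M)`, this yields the integral inequality
`F t ≤ 1 + ∫₀ᵗ a e^{cθ} F θ dθ`, and Grönwall's argument bounds `F θ` by
`exp(a/c (e^{cθ} - 1))`, the moment generating function of `c · Poisson(a/c)`. Chernoff's bound
at `θ = log(x/a)/c`, with the truncation level `M = e^{θx}` invisible on `{X ≥ x}`, finishes. -/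

theorem min_exp_mul_le_one_add_integral {x t M : ℝ} (hx : 0 ≤ x) (ht : 0 ≤ t) (hM : 1 ≤ M) :
    min (exp (t * x)) M ≤ 1 + ∫ θ in (0:ℝ)..t, x * min (exp (θ * x)) M := by
  rcases hx.eq_or_lt with rfl | hx
  · simp [hM]
  have hmin : ∀ θ, min (exp (θ * x)) M = exp (min θ (log M / x) * x) := by
    intro θ
    rw [min_mul_of_nonneg _ _ hx.le, div_mul_cancel₀ _ hx.ne', exp_monotone.map_min,
      exp_log (by linarith)]
  set s := min t (log M / x)
  have hs0 : 0 ≤ s := le_min ht (div_nonneg (log_nonneg hM) hx.le)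
  have hderiv : ∀ θ ∈ Set.uIcc 0 s, HasDerivAt (fun u => exp (u * x)) (x * exp (θ * x)) θ :=
    fun θ _ => by simpa [mul_comm] using ((hasDerivAt_id θ).mul_const x).exp
  calc min (exp (t * x)) M = exp (s * x) := hmin t
    _ = 1 + ∫ θ in (0:ℝ)..s, x * exp (θ * x) := by
      rw [intervalIntegral.integral_eq_sub_of_hasDerivAt hderiv
        (Continuous.intervalIntegrable (by fun_prop) _ _)]
      simp
    _ = 1 + ∫ θ in (0:ℝ)..s, x * min (exp (θ * x)) M := by
      congr 1
      refine intervalIntegral.integral_congr fun θ hθ => ?_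
      rw [Set.uIcc_of_le hs0] at hθ
      rw [hmin, min_eq_left (hθ.2.trans (min_le_right _ _))]
    _ ≤ 1 + ∫ θ in (0:ℝ)..t, x * min (exp (θ * x)) M := by
      gcongr
      exact intervalIntegral.integral_mono_interval le_rfl hs0 (min_le_left _ _)
        (.of_forall fun θ => by positivity) (Continuous.intervalIntegrable (by fun_prop) _ _)

theorem min_exp_le_exp_mul_min_exp {θ x y c M : ℝ} (hθ : 0 ≤ θ) (hc : 0 ≤ c) (hM : 0 ≤ M)
    (hyx : y ≤ x + c) : min (exp (θ * y)) M ≤ exp (θ * c) * min (exp (θ * x)) M := by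
  rw [mul_min_of_nonneg _ _ (exp_pos _).le, ← exp_add]
  exact min_le_min (exp_le_exp.2 (by nlinarith))
    (le_mul_of_one_le_left hM (one_le_exp (mul_nonneg hθ hc)))

theorem le_exp_sub_of_le_one_add_integral {F k K : ℝ → ℝ} (hF : Continuous F) (hk : Continuous k)
    (hk0 : ∀ s, 0 ≤ s → 0 ≤ k s) (hK : ∀ s, HasDerivAt K (k s) s)
    (hFB : ∀ t, 0 ≤ t → F t ≤ 1 + ∫ θ in (0:ℝ)..t, k θ * F θ) {t : ℝ} (ht : 0 ≤ t) :
    F t ≤ exp (K t - K 0) := by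
  set B := fun s => 1 + ∫ θ in (0:ℝ)..s, k θ * F θ
  have hB : ∀ s, HasDerivAt B (k s * F s) s := fun s =>
    (intervalIntegral.integral_hasDerivAt_right ((hk.mul hF).intervalIntegrable _ _)
      ((hk.mul hF).stronglyMeasurableAtFilter _ _) (hk.mul hF).continuousAt).const_add 1
  -- `B' = k F ≤ k B` on `[0, ∞)`, so `B` is dominated by the solution of `B' = k B`.
  set G := fun s => exp (-(K s - K 0)) * B s
  have hG : ∀ s, HasDerivAt G (exp (-(K s - K 0)) * k s * (F s - B s)) s := fun s => by
    have hE : HasDerivAt (fun u => exp (-(K u - K 0))) (exp (-(K s - K 0)) * -k s) s :=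
      ((hK s).sub_const (K 0)).neg.exp
    exact (hE.fun_mul (hB s)).congr_deriv (by ring)
  have hanti : AntitoneOn G (Set.Ici 0) := by
    refine antitoneOn_of_hasDerivWithinAt_nonpos (convex_Ici 0)
      (fun s _ => (hG s).continuousAt.continuousWithinAt) (fun s _ => (hG s).hasDerivWithinAt)
      fun s hs => ?_
    rw [interior_Ici] at hs
    exact mul_nonpos_of_nonneg_of_nonpos (mul_nonneg (exp_pos _).le (hk0 s hs.out.le))
      (sub_nonpos.2 (hFB s hs.out.le))
  have hG1 : G t ≤ 1 := by simpa [G, B] using hanti Set.self_mem_Ici ht ht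
  calc F t ≤ B t := hFB t ht
    _ = exp (K t - K 0) * G t := by simp only [G, ← mul_assoc, ← exp_add]; simp
    _ ≤ exp (K t - K 0) := mul_le_of_le_one_right (exp_pos _).le hG1

section TruncatedExponentialMoments

variable {Ω : Type*} [MeasurableSpace Ω] {μ : Measure Ω} {X : Ω → ℝ} {M : ℝ}

theorem integrable_min_exp [IsFiniteMeasure μ] (hX : Measurable X) (hM : 0 ≤ M) (θ : ℝ) :
    Integrable (fun ω => min (exp (θ * X ω)) M) μ :=
  (integrable_const M).mono' (by fun_prop) (.of_forall fun ω => by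
    rw [norm_of_nonneg (by positivity)]; exact min_le_right _ _)

theorem continuous_integral_mul_min_exp {Z : Ω → ℝ} (hZ : Integrable Z μ) (hX : Measurable X)
    (hM : 0 ≤ M) : Continuous fun θ => ∫ ω, Z ω * min (exp (θ * X ω)) M ∂μ :=
  continuous_of_dominated (bound := fun ω => |Z ω| * M)
    (fun θ => hZ.aestronglyMeasurable.mul (by fun_prop))
    (fun θ => .of_forall fun ω => by
      rw [norm_mul, norm_of_nonneg (by positivity : 0 ≤ min (exp (θ * X ω)) M)]
      exact mul_le_mul_of_nonneg_left (min_le_right _ _) (norm_nonneg _))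
    (hZ.abs.mul_const M) (.of_forall fun ω => by fun_prop)

theorem integral_min_exp_le_one_add_integral [IsProbabilityMeasure μ] (hX : Measurable X)
    (hX0 : ∀ᵐ ω ∂μ, 0 ≤ X ω) (hXi : Integrable X μ) (hM : 1 ≤ M) {t : ℝ} (ht : 0 ≤ t) :
    ∫ ω, min (exp (t * X ω)) M ∂μ ≤
      1 + ∫ θ in (0:ℝ)..t, ∫ ω, X ω * min (exp (θ * X ω)) M ∂μ := by
  have hint : Integrable (Function.uncurry fun θ ω => X ω * min (exp (θ * X ω)) M)
      ((volume.restrict (Set.uIoc 0 t)).prod μ) := by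
    refine ((integrableOn_const (C := M) (by simp)).mul_prod hXi.abs).mono'
      (by fun_prop) (.of_forall fun ⟨θ, ω⟩ => ?_)
    rw [Function.uncurry_apply_pair, norm_mul, Real.norm_eq_abs,
      norm_of_nonneg (by positivity : 0 ≤ min (exp (θ * X ω)) M), mul_comm]
    exact mul_le_mul_of_nonneg_right (min_le_right (exp (θ * X ω)) M) (abs_nonneg (X ω))
  have hinner : Integrable (fun ω => ∫ θ in (0:ℝ)..t, X ω * min (exp (θ * X ω)) M) μ := by
    rw [Set.uIoc_of_le ht] at hint
    simpa only [intervalIntegral.integral_of_le ht, Function.uncurry_apply_pair]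
      using hint.integral_prod_right
  rw [intervalIntegral_integral_swap hint]
  calc ∫ ω, min (exp (t * X ω)) M ∂μ
      ≤ ∫ ω, (1 + ∫ θ in (0:ℝ)..t, X ω * min (exp (θ * X ω)) M) ∂μ := by
        exact integral_mono_ae (integrable_min_exp hX (by linarith) t)
          ((integrable_const 1).add hinner)
          (hX0.mono fun ω hω => min_exp_mul_le_one_add_integral hω ht hM)
    _ = _ := by
      rw [integral_add (integrable_const 1) hinner]
      simp

theorem measureReal_le_exp_mul_integral_min_exp [IsFiniteMeasure μ] (hX : Measurable X) {θ : ℝ}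
    (hθ : 0 ≤ θ) (x : ℝ) :
    μ.real {ω | x ≤ X ω} ≤ exp (-(θ * x)) * ∫ ω, min (exp (θ * X ω)) (exp (θ * x)) ∂μ := by
  have hmarkov := mul_meas_ge_le_integral_of_nonneg (.of_forall fun ω => by positivity)
    (integrable_min_exp (μ := μ) hX (exp_pos (θ * x)).le θ) (exp (θ * x))
  have hsub : {ω | x ≤ X ω} ⊆ {ω | exp (θ * x) ≤ min (exp (θ * X ω)) (exp (θ * x))} :=
    fun ω hω => le_min (exp_le_exp.2 (mul_le_mul_of_nonneg_left hω hθ)) le_rfl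
  calc μ.real {ω | x ≤ X ω}
      ≤ μ.real {ω | exp (θ * x) ≤ min (exp (θ * X ω)) (exp (θ * x))} := measureReal_mono hsub
    _ = exp (-(θ * x)) *
        (exp (θ * x) * μ.real {ω | exp (θ * x) ≤ min (exp (θ * X ω)) (exp (θ * x))}) := by
      rw [← mul_assoc, ← exp_add]; simp
    _ ≤ _ := by gcongr

end TruncatedExponentialMoments

section SizeBias

variable {Ω : Type*} [MeasurableSpace Ω] {μ : Measure Ω} [IsProbabilityMeasure μ] {X Y : Ω → ℝ}
  {a c : ℝ}

theorem integral_min_exp_le_of_sizeBias (ha : 0 < a) (hc : 0 < c) (hXm : Measurable X)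
    (hYm : Measurable Y) (hXnn : ∀ᵐ ω ∂μ, 0 ≤ X ω) (hXint : Integrable X μ)
    (hsb : ∀ g : ℝ → ℝ, Measurable g → (∃ C, ∀ x, |g x| ≤ C) →
        ∫ ω, g (Y ω) ∂μ = (∫ ω, X ω * g (X ω) ∂μ) / a)
    (hcoup : ∀ᵐ ω ∂μ, Y ω ≤ X ω + c) {θ M : ℝ} (hθ : 0 ≤ θ) (hM : 1 ≤ M) :
    ∫ ω, min (exp (θ * X ω)) M ∂μ ≤ exp (a / c * (exp (c * θ) - 1)) := by
  have hM0 : 0 ≤ M := zero_le_one.trans hM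
  set F := fun s => ∫ ω, min (exp (s * X ω)) M ∂μ
  have hderiv : ∀ s, 0 ≤ s → ∫ ω, X ω * min (exp (s * X ω)) M ∂μ ≤ a * exp (c * s) * F s := by
    intro s hs
    have hbias := hsb (fun z => min (exp (s * z)) M) (by fun_prop)
      ⟨M, fun z => by rw [abs_of_nonneg (by positivity)]; exact min_le_right _ _⟩
    calc ∫ ω, X ω * min (exp (s * X ω)) M ∂μ = a * ∫ ω, min (exp (s * Y ω)) M ∂μ := by
          rw [hbias, mul_div_cancel₀ _ ha.ne']
      _ ≤ a * ∫ ω, exp (s * c) * min (exp (s * X ω)) M ∂μ := by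
          exact mul_le_mul_of_nonneg_left (integral_mono_ae (integrable_min_exp hYm hM0 s)
            ((integrable_min_exp hXm hM0 s).const_mul _)
            (hcoup.mono fun ω h => min_exp_le_exp_mul_min_exp hs hc.le hM0 h)) ha.le
      _ = a * exp (c * s) * F s := by rw [integral_const_mul, mul_comm s c, mul_assoc]
  have hF : Continuous F := by
    simpa using continuous_integral_mul_min_exp (integrable_const (1 : ℝ)) hXm hM0 (μ := μ)
  have hK : ∀ s, HasDerivAt (fun s => a / c * exp (c * s)) (a * exp (c * s)) s := fun s =>
    ((((hasDerivAt_id' s).const_mul c).exp).const_mul (a / c)).congr_deriv (by field_simp)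
  have hFB : ∀ t, 0 ≤ t → F t ≤ 1 + ∫ s in (0:ℝ)..t, a * exp (c * s) * F s := fun t ht =>
    (integral_min_exp_le_one_add_integral hXm hXnn hXint hM ht).trans <| by
      gcongr
      exact intervalIntegral.integral_mono_on ht
        ((continuous_integral_mul_min_exp hXint hXm hM0).intervalIntegrable _ _)
        (Continuous.intervalIntegrable (by fun_prop) _ _) fun s hs => hderiv s hs.1
  convert le_exp_sub_of_le_one_add_integral hF (by fun_prop) (fun s _ => by positivity) hK hFB hθ
    using 2
  simp only [mul_zero, exp_zero]
  ring

end SizeBias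

theorem stmt_9_general
    {Ω : Type*} [MeasurableSpace Ω] (μ : Measure Ω) [IsProbabilityMeasure μ]
    (X Y : Ω → ℝ) (a c : ℝ) (ha : 0 < a) (hc : 0 < c)
    (hXm : Measurable X) (hYm : Measurable Y)
    (hXnn : ∀ᵐ ω ∂μ, 0 ≤ X ω)
    (hXint : Integrable X μ)
    (hsb : ∀ g : ℝ → ℝ, Measurable g → (∃ C, ∀ x, |g x| ≤ C) →
        ∫ ω, g (Y ω) ∂μ = (∫ ω, X ω * g (X ω) ∂μ) / a)
    (hcoup : ∀ᵐ ω ∂μ, Y ω ≤ X ω + c) :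
    ∀ x : ℝ, a ≤ x →
      (μ {ω | x ≤ X ω}).toReal ≤ (a / x) ^ (x / c) * Real.exp ((x - a) / c) := by
  intro x hx
  have hx0 : 0 < x := ha.trans_le hx
  set θ := log (x / a) / c with hθdef
  have hθ : 0 ≤ θ := div_nonneg (log_nonneg ((one_le_div ha).2 hx)) hc.le
  have hcθ : exp (c * θ) = x / a := by
    rw [hθdef, mul_div_cancel₀ _ hc.ne', exp_log (div_pos hx0 ha)]
  calc (μ {ω | x ≤ X ω}).toReal
      ≤ exp (-(θ * x)) * ∫ ω, min (exp (θ * X ω)) (exp (θ * x)) ∂μ :=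
        measureReal_le_exp_mul_integral_min_exp hXm hθ x
    _ ≤ exp (-(θ * x)) * exp (a / c * (exp (c * θ) - 1)) := by
        gcongr
        exact integral_min_exp_le_of_sizeBias ha hc hXm hYm hXnn hXint hsb hcoup hθ
          (one_le_exp (mul_nonneg hθ hx0.le))
    _ = (a / x) ^ (x / c) * exp ((x - a) / c) := by
        rw [hcθ, rpow_def_of_pos (div_pos ha hx0), ← exp_add, ← exp_add, hθdef,
          log_div ha.ne' hx0.ne', log_div hx0.ne' ha.ne']
        congr 1
        field_simp
        ring

theorem stmt_9
    {Ω : Type*} [MeasurableSpace Ω] (μ : Measure Ω) [IsProbabilityMeasure μ]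
    (X Y : Ω → ℝ) (a c : ℝ) (ha : 0 < a) (hc : 0 < c)
    (hXm : Measurable X) (hYm : Measurable Y)
    (hXnn : ∀ᵐ ω ∂μ, 0 ≤ X ω)
    (hXint : Integrable X μ)
    (hmean : ∫ ω, X ω ∂μ = a)
    (hsb : ∀ g : ℝ → ℝ, Measurable g → (∃ C, ∀ x, |g x| ≤ C) →
        ∫ ω, g (Y ω) ∂μ = (∫ ω, X ω * g (X ω) ∂μ) / a)
    (hcoup : ∀ᵐ ω ∂μ, Y ω ≤ X ω + c) :
    ∀ x : ℝ, a ≤ x →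
      (μ {ω | x ≤ X ω}).toReal ≤ (a / x) ^ (x / c) * Real.exp ((x - a) / c) :=
  stmt_9_general μ X Y a c ha hc hXm hYm hXnn hXint hsb hcoup
end

section
/- For all real numbers 0 < a ≤ x and c > 0, (a/x)^{x/c} e^{(x−a)/c} ≤ exp(−(x−a)²/(c(a+x))), with strict inequality when x > a. -/
open Real

/-!
Taking logarithms, the inequality becomes `log (x / a) ≥ 2 (x - a) / (x + a)`, which is
`log (1 + u) ≥ 2 u / (u + 2)` for `u = (x - a) / a`, strict when `u > 0`.
-/

lemma two_mul_sub_div_add_le_log_div {a x : ℝ} (ha : 0 < a) (hax : a ≤ x) :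
    2 * (x - a) / (x + a) ≤ log (x / a) := by
  have hu : 0 ≤ (x - a) / a := div_nonneg (sub_nonneg.mpr hax) ha.le
  have h := le_log_one_add_of_nonneg hu
  rwa [show 1 + (x - a) / a = x / a by field_simp; ring,
    show 2 * ((x - a) / a) / ((x - a) / a + 2) = 2 * (x - a) / (x + a) by field_simp; ring] at h

lemma two_mul_sub_div_add_lt_log_div {a x : ℝ} (ha : 0 < a) (hax : a < x) :
    2 * (x - a) / (x + a) < log (x / a) := by
  have hu : 0 < (x - a) / a := div_pos (sub_pos.mpr hax) ha
  have h := lt_log_one_add_of_pos hu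
  rwa [show 1 + (x - a) / a = x / a by field_simp; ring,
    show 2 * ((x - a) / a) / ((x - a) / a + 2) = 2 * (x - a) / (x + a) by field_simp; ring] at h

lemma div_rpow_mul_exp_eq {a x c : ℝ} (ha : 0 < a) (hx : 0 < x) (hc : c ≠ 0) :
    (a / x) ^ (x / c) * exp ((x - a) / c) =
      exp (-(x - a) ^ 2 / (c * (a + x)) + x / c * (2 * (x - a) / (x + a) - log (x / a))) := by
  rw [rpow_def_of_pos (div_pos ha hx), ← exp_add, log_div ha.ne' hx.ne',
    log_div hx.ne' ha.ne']
  congr 1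
  field_simp
  ring

theorem stmt_11 (a x c : ℝ) (ha : 0 < a) (hax : a ≤ x) (hc : 0 < c) :
    (a / x) ^ (x / c) * Real.exp ((x - a) / c) ≤
        Real.exp (-(x - a) ^ 2 / (c * (a + x))) ∧
      (a < x →
        (a / x) ^ (x / c) * Real.exp ((x - a) / c) <
          Real.exp (-(x - a) ^ 2 / (c * (a + x)))) := by
  have hxc : 0 < x / c := div_pos (ha.trans_le hax) hc
  rw [div_rpow_mul_exp_eq ha (ha.trans_le hax) hc.ne']
  refine ⟨exp_le_exp.mpr (add_le_of_nonpos_right ?_), fun hlt => exp_lt_exp.mpr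
    (add_lt_of_neg_right _ ?_)⟩
  · exact mul_nonpos_of_nonneg_of_nonpos hxc.le
      (sub_nonpos.mpr (two_mul_sub_div_add_le_log_div ha hax))
  · exact mul_neg_of_pos_of_neg hxc (sub_neg.mpr (two_mul_sub_div_add_lt_log_div ha hlt))
end

section
/- For all real numbers 0 ≤ x ≤ a with a, c > 0, (a/x)^{x/c} e^{(x−a)/c} ≤ exp(−(x−a)²/(2ca)), with strict inequality when x < a. -/
/-!
Write `v = a / x > 1`. Taking logarithms, the inequality becomes
`x log v + (x - a) < -(x - a)² / (2a)`, i.e. `x log v < (a² - x²) / (2a) = x (v - 1/v) / 2`,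
which is `log v < sinh (log v)` for `log v > 0`.
-/

open Real

theorem Real.log_lt_sub_inv_div_two {v : ℝ} (hv : 1 < v) : log v < (v - v⁻¹) / 2 := by
  rw [← sinh_log (by positivity)]
  exact self_lt_sinh_iff.2 (log_pos hv)

theorem mul_log_div_lt {a x : ℝ} (hx : 0 < x) (hxa : x < a) :
    x * log (a / x) < (a ^ 2 - x ^ 2) / (2 * a) := by
  have hlog := log_lt_sub_inv_div_two ((one_lt_div hx).2 hxa)
  calc x * log (a / x) < x * ((a / x - (a / x)⁻¹) / 2) := (mul_lt_mul_iff_right₀ hx).2 hlog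
    _ = (a ^ 2 - x ^ 2) / (2 * a) := by field_simp

theorem rpow_mul_exp_lt_of_pos {a x c : ℝ} (hc : 0 < c) (hx : 0 < x) (hxa : x < a) :
    (a / x) ^ (x / c) * exp ((x - a) / c) < exp (-(x - a) ^ 2 / (2 * c * a)) := by
  have ha : 0 < a := hx.trans hxa
  rw [rpow_def_of_pos (by positivity), ← exp_add, exp_lt_exp]
  calc log (a / x) * (x / c) + (x - a) / c = (x * log (a / x) + (x - a)) / c := by ring
    _ < ((a ^ 2 - x ^ 2) / (2 * a) + (x - a)) / c := by
      gcongr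
      exact mul_log_div_lt hx hxa
    _ = -(x - a) ^ 2 / (2 * c * a) := by field_simp; ring

/-- Although `a / 0 = 0`, the exponent `0 / c` vanishes, so the power is `1`, matching the
convention `(a/x)^{x/c} = 1` at `x = 0`. -/
theorem rpow_mul_exp_lt_of_zero {a c : ℝ} (ha : 0 < a) (hc : 0 < c) :
    (a / 0) ^ ((0 : ℝ) / c) * exp ((0 - a) / c) < exp (-(0 - a) ^ 2 / (2 * c * a)) := by
  rw [zero_div, rpow_zero, one_mul, exp_lt_exp, zero_sub, neg_sq]
  calc -a / c = -a ^ 2 / (c * a) := by field_simp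
    _ < -a ^ 2 / (2 * c * a) := by
      rw [neg_div, neg_div, neg_lt_neg_iff]
      gcongr
      linarith

theorem rpow_mul_exp_lt {a x c : ℝ} (ha : 0 < a) (hc : 0 < c) (hx0 : 0 ≤ x) (hxa : x < a) :
    (a / x) ^ (x / c) * exp ((x - a) / c) < exp (-(x - a) ^ 2 / (2 * c * a)) := by
  rcases hx0.eq_or_lt with rfl | hx
  · exact rpow_mul_exp_lt_of_zero ha hc
  · exact rpow_mul_exp_lt_of_pos hc hx hxa

theorem stmt_12 (a x c : ℝ) (ha : 0 < a) (hc : 0 < c) (hx0 : 0 ≤ x) (hxa : x ≤ a) :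
    (a / x) ^ (x / c) * Real.exp ((x - a) / c) ≤
        Real.exp (-(x - a) ^ 2 / (2 * c * a)) ∧
      (x < a →
        (a / x) ^ (x / c) * Real.exp ((x - a) / c) <
          Real.exp (-(x - a) ^ 2 / (2 * c * a))) := by
  refine ⟨?_, rpow_mul_exp_lt ha hc hx0⟩
  rcases hxa.eq_or_lt with rfl | hlt
  · simp [div_self ha.ne']
  · exact (rpow_mul_exp_lt ha hc hx0 hlt).le
end

section
/- Suppose X ≥ 0 with mean a ∈ (0,∞) admits a c-bounded size bias coupling. Then Var(X) ≤ a c, and consequently for all x ≤ a, P(X ≤ x) ≤ ac/(ac + (a−x)²). -/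
/-!
Testing the size-bias identity against the bounded truncations `x ↦ max 0 (min x n)` and using
`Y ≤ X + c` gives `E[X · min(X, n)] ≤ a · E[X + c] = a (a + c)`, so by monotone convergence
`E[X²] ≤ a (a + c)`, i.e. `Var X ≤ a c`. The tail bound is Cantelli's inequality: for `t > 0`,
`σ² ≥ Var X` and `s = σ² / t`, Markov's inequality for `(X - E X - s)²` on `{X ≤ E X - t}` gives
`P(X ≤ E X - t) ≤ (σ² + s²) / (t + s)² = σ² / (σ² + t²)`.
-/

open MeasureTheory ProbabilityTheory Real

open Filter Topology

section MonotoneConvergence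

variable {α : Type*} [MeasurableSpace α] {μ : Measure α}

theorem integrable_and_integral_le_of_tendsto_of_monotone {f : ℕ → α → ℝ} {F : α → ℝ} {B : ℝ}
    (hf : ∀ n, Integrable (f n) μ) (hf_nonneg : ∀ n, 0 ≤ᵐ[μ] f n)
    (h_mono : ∀ᵐ x ∂μ, Monotone fun n ↦ f n x)
    (h_tendsto : ∀ᵐ x ∂μ, Tendsto (fun n ↦ f n x) atTop (𝓝 (F x)))
    (h_bound : ∀ n, ∫ x, f n x ∂μ ≤ B) :
    Integrable F μ ∧ ∫ x, F x ∂μ ≤ B := by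
  have hF_nonneg : 0 ≤ᵐ[μ] F := by
    filter_upwards [h_tendsto, hf_nonneg 0, h_mono] with x hx h0 hx_mono
    exact ge_of_tendsto' hx fun n ↦ h0.trans (hx_mono n.zero_le)
  have hF_meas : AEStronglyMeasurable F μ :=
    aestronglyMeasurable_of_tendsto_ae _ (fun n ↦ (hf n).1) h_tendsto
  have h_lintegral : Tendsto (fun n ↦ ∫⁻ x, ENNReal.ofReal (f n x) ∂μ) atTop
      (𝓝 (∫⁻ x, ENNReal.ofReal (F x) ∂μ)) :=
    lintegral_tendsto_of_tendsto_of_monotone (fun n ↦ (hf n).aemeasurable.ennreal_ofReal)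
      (by filter_upwards [h_mono] with x hx using fun _ _ hmn ↦ ENNReal.ofReal_le_ofReal (hx hmn))
      (by filter_upwards [h_tendsto] with x hx using (ENNReal.continuous_ofReal.tendsto _).comp hx)
  have hF : Integrable F μ := by
    refine (lintegral_ofReal_ne_top_iff_integrable hF_meas hF_nonneg).1 <|
      ne_top_of_le_ne_top (b := ENNReal.ofReal B) ENNReal.ofReal_ne_top
        (le_of_tendsto' h_lintegral fun n ↦ ?_)
    rw [← ofReal_integral_eq_lintegral_ofReal (hf n) (hf_nonneg n)]
    exact ENNReal.ofReal_le_ofReal (h_bound n)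
  exact ⟨hF, le_of_tendsto' (integral_tendsto_of_tendsto_of_monotone hf hF h_mono h_tendsto)
    h_bound⟩

end MonotoneConvergence

section Truncation

def truncateAt (n : ℕ) (x : ℝ) : ℝ := max 0 (min x n)

variable {n : ℕ} {x : ℝ}

theorem measurable_truncateAt (n : ℕ) : Measurable (truncateAt n) :=
  measurable_const.max (measurable_id.min measurable_const)

theorem truncateAt_nonneg : 0 ≤ truncateAt n x := le_max_left _ _

theorem truncateAt_le : truncateAt n x ≤ n := max_le n.cast_nonneg (min_le_right _ _)

theorem abs_truncateAt_le (n : ℕ) (x : ℝ) : |truncateAt n x| ≤ n := by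
  rw [abs_of_nonneg truncateAt_nonneg]
  exact truncateAt_le

theorem truncateAt_le_max_zero : truncateAt n x ≤ max 0 x :=
  max_le_max le_rfl (min_le_left _ _)

theorem monotone_truncateAt (x : ℝ) : Monotone fun n ↦ truncateAt n x :=
  fun _ _ hmn ↦ max_le_max le_rfl (min_le_min le_rfl (Nat.cast_le.2 hmn))

theorem tendsto_truncateAt (hx : 0 ≤ x) : Tendsto (fun n ↦ truncateAt n x) atTop (𝓝 x) := by
  refine tendsto_const_nhds.congr' ?_
  filter_upwards [eventually_ge_atTop ⌈x⌉₊] with n hn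
  rw [truncateAt, min_eq_left ((Nat.le_ceil x).trans (Nat.cast_le.2 hn)), max_eq_right hx]

end Truncation

section SizeBias

variable {Ω : Type*} [MeasurableSpace Ω] {μ : Measure Ω} [IsProbabilityMeasure μ]
  {X Y : Ω → ℝ} {a c : ℝ}

theorem integral_mul_truncateAt_le (ha : 0 < a) (hc : 0 ≤ c) (hXnn : ∀ᵐ ω ∂μ, 0 ≤ X ω)
    (hXint : Integrable X μ) (hmean : ∫ ω, X ω ∂μ = a)
    (hsb : ∀ g : ℝ → ℝ, Measurable g → (∃ C, ∀ x, |g x| ≤ C) →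
        ∫ ω, g (Y ω) ∂μ = (∫ ω, X ω * g (X ω) ∂μ) / a)
    (hcoup : ∀ᵐ ω ∂μ, Y ω ≤ X ω + c) (n : ℕ) :
    ∫ ω, X ω * truncateAt n (X ω) ∂μ ≤ a * (a + c) := by
  have h_sb : ∫ ω, X ω * truncateAt n (X ω) ∂μ = a * ∫ ω, truncateAt n (Y ω) ∂μ := by
    rw [hsb _ (measurable_truncateAt n) ⟨n, abs_truncateAt_le n⟩]
    field_simp
  have h_le : ∀ᵐ ω ∂μ, truncateAt n (Y ω) ≤ X ω + c := by
    filter_upwards [hcoup, hXnn] with ω hY hX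
    exact truncateAt_le_max_zero.trans (max_le (by linarith) hY)
  have hY : ∫ ω, truncateAt n (Y ω) ∂μ ≤ a + c := calc
    _ ≤ ∫ ω, (X ω + c) ∂μ := integral_mono_of_nonneg
          (ae_of_all _ fun _ ↦ truncateAt_nonneg) (hXint.add (integrable_const c)) h_le
    _ = a + c := by simp [integral_add hXint (integrable_const c), hmean]
  rw [h_sb]
  gcongr

theorem integrable_sq_and_integral_sq_le_of_sizeBias (ha : 0 < a) (hc : 0 ≤ c)
    (hXnn : ∀ᵐ ω ∂μ, 0 ≤ X ω) (hXint : Integrable X μ) (hmean : ∫ ω, X ω ∂μ = a)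
    (hsb : ∀ g : ℝ → ℝ, Measurable g → (∃ C, ∀ x, |g x| ≤ C) →
        ∫ ω, g (Y ω) ∂μ = (∫ ω, X ω * g (X ω) ∂μ) / a)
    (hcoup : ∀ᵐ ω ∂μ, Y ω ≤ X ω + c) :
    Integrable (fun ω ↦ X ω ^ 2) μ ∧ ∫ ω, X ω ^ 2 ∂μ ≤ a * (a + c) := by
  refine integrable_and_integral_le_of_tendsto_of_monotone (fun n ↦ ?_) (fun n ↦ ?_) ?_ ?_
    (integral_mul_truncateAt_le ha hc hXnn hXint hmean hsb hcoup)
  · have h_meas := (measurable_truncateAt n).comp_aemeasurable hXint.1.aemeasurable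
    refine (hXint.mul_const (n : ℝ)).mono' (hXint.1.mul h_meas.aestronglyMeasurable) ?_
    filter_upwards [hXnn] with ω hω
    rw [Real.norm_eq_abs, abs_of_nonneg (mul_nonneg hω truncateAt_nonneg)]
    exact mul_le_mul_of_nonneg_left truncateAt_le hω
  · filter_upwards [hXnn] with ω hω using mul_nonneg hω truncateAt_nonneg
  · filter_upwards [hXnn] with ω hω using
      fun _ _ hmn ↦ mul_le_mul_of_nonneg_left (monotone_truncateAt _ hmn) hω
  · filter_upwards [hXnn] with ω hω
    simpa [sq] using (tendsto_truncateAt hω).const_mul (X ω)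

end SizeBias

section Cantelli

variable {Ω : Type*} [MeasurableSpace Ω] {μ : Measure Ω} [IsProbabilityMeasure μ]
  {X : Ω → ℝ}

theorem measureReal_le_sub_le_div_of_variance_le (hX : MemLp X 2 μ) {v t : ℝ}
    (hv : variance X μ ≤ v) (ht : 0 < t) :
    μ.real {ω | X ω ≤ μ[X] - t} ≤ v / (v + t ^ 2) := by
  have hv0 : 0 ≤ v := (variance_nonneg X μ).trans hv
  set s := v / t with hs
  have hs0 : 0 ≤ s := div_nonneg hv0 ht.le
  set Z : Ω → ℝ := fun ω ↦ X ω - (μ[X] + s)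
  have hZ : MemLp Z 2 μ := hX.sub (memLp_const _)
  have hZ_sq : ∫ ω, Z ω ^ 2 ∂μ = variance X μ + s ^ 2 := by
    have h_mean : μ[Z] = -s := by
      simp [Z, integral_sub (hX.integrable one_le_two) (integrable_const _)]
    have := variance_eq_sub hZ
    rw [variance_sub_const hX.1, h_mean] at this
    simp only [Pi.pow_apply] at this
    linarith
  have h_subset : {ω | X ω ≤ μ[X] - t} ⊆ {ω | (t + s) ^ 2 ≤ Z ω ^ 2} := by
    intro ω (hω : X ω ≤ μ[X] - t)
    show (t + s) ^ 2 ≤ (X ω - (μ[X] + s)) ^ 2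
    nlinarith
  have h_markov : (t + s) ^ 2 * μ.real {ω | X ω ≤ μ[X] - t} ≤ v + s ^ 2 := calc
    _ ≤ (t + s) ^ 2 * μ.real {ω | (t + s) ^ 2 ≤ Z ω ^ 2} :=
          mul_le_mul_of_nonneg_left (measureReal_mono h_subset) (sq_nonneg _)
    _ ≤ ∫ ω, Z ω ^ 2 ∂μ :=
          mul_meas_ge_le_integral_of_nonneg (ae_of_all _ fun _ ↦ sq_nonneg _) hZ.integrable_sq _
    _ ≤ v + s ^ 2 := by linarith
  have h_eq : (v + s ^ 2) / (t + s) ^ 2 = v / (v + t ^ 2) := by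
    rw [hs]
    field_simp
    ring
  rw [← h_eq, le_div_iff₀ (by positivity), mul_comm]
  exact h_markov

end Cantelli

theorem stmt_13_general
    {Ω : Type*} [MeasurableSpace Ω] (μ : Measure Ω) [IsProbabilityMeasure μ]
    (X Y : Ω → ℝ) (a c : ℝ) (ha : 0 < a) (hc : 0 < c)
    (hXnn : ∀ᵐ ω ∂μ, 0 ≤ X ω)
    (hXint : Integrable X μ)
    (hmean : ∫ ω, X ω ∂μ = a)
    (hsb : ∀ g : ℝ → ℝ, Measurable g → (∃ C, ∀ x, |g x| ≤ C) →
        ∫ ω, g (Y ω) ∂μ = (∫ ω, X ω * g (X ω) ∂μ) / a)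
    (hcoup : ∀ᵐ ω ∂μ, Y ω ≤ X ω + c) :
    variance X μ ≤ a * c ∧
      ∀ x : ℝ, x ≤ a →
        (μ {ω | X ω ≤ x}).toReal ≤ a * c / (a * c + (a - x) ^ 2) := by
  obtain ⟨hX_sq, h_sq_le⟩ :=
    integrable_sq_and_integral_sq_le_of_sizeBias ha hc.le hXnn hXint hmean hsb hcoup
  have hX : MemLp X 2 μ := (memLp_two_iff_integrable_sq hXint.1).2 hX_sq
  have h_var : variance X μ ≤ a * c := by
    rw [variance_eq_sub hX, hmean]
    simp only [Pi.pow_apply]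
    linarith
  refine ⟨h_var, fun x hx ↦ ?_⟩
  rcases hx.lt_or_eq with hx | rfl
  · have := measureReal_le_sub_le_div_of_variance_le hX h_var (sub_pos.2 hx)
    rwa [hmean, sub_sub_cancel] at this
  · rw [sub_self, zero_pow two_ne_zero, add_zero, div_self (by positivity)]
    exact measureReal_le_one

theorem stmt_13
    {Ω : Type*} [MeasurableSpace Ω] (μ : Measure Ω) [IsProbabilityMeasure μ]
    (X Y : Ω → ℝ) (a c : ℝ) (ha : 0 < a) (hc : 0 < c)
    (hXm : Measurable X) (hYm : Measurable Y)
    (hXnn : ∀ᵐ ω ∂μ, 0 ≤ X ω)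
    (hXint : Integrable X μ)
    (hmean : ∫ ω, X ω ∂μ = a)
    (hsb : ∀ g : ℝ → ℝ, Measurable g → (∃ C, ∀ x, |g x| ≤ C) →
        ∫ ω, g (Y ω) ∂μ = (∫ ω, X ω * g (X ω) ∂μ) / a)
    (hcoup : ∀ᵐ ω ∂μ, Y ω ≤ X ω + c) :
    variance X μ ≤ a * c ∧
      ∀ x : ℝ, x ≤ a →
        (μ {ω | X ω ≤ x}).toReal ≤ a * c / (a * c + (a - x) ^ 2) :=
  stmt_13_general μ X Y a c ha hc hXnn hXint hmean hsb hcoup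
end

section
/- For 0 < u ≤ v, Γ(v + 1/2)/Γ(u + 1/2) ≥ v^v / (e^{v−u} u^u). -/
/-!
Put `g x = log Γ(x + 1/2) - (x log x - x)`; the inequality says `g u ≤ g v`. The increment
`g (x + 1) - g x = log (x + 1/2) - (x + 1) log (x + 1) + x log x + 1` is antitone, because
`log (1 + 1/x) ≥ 1/(x + 1/2)`. Telescoping, `g v - g u ≥ g (v + n) - g (u + n)` for every `n`,
and log-convexity of `Γ` bounds the right-hand side below by
`(v - u) (log (u + n - 1/2) - log (v + n))`, which tends to `0`.
-/

open Real Set Filter Topology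

lemma sub_add_nat_le_sub_of_antitoneOn {f : ℝ → ℝ} {a : ℝ}
    (hf : AntitoneOn (fun x => f (x + 1) - f x) (Ioi a)) {w z : ℝ} (hw : a < w) (hwz : w ≤ z) :
    ∀ n : ℕ, f (z + n) - f (w + n) ≤ f z - f w
  | 0 => by simp
  | n + 1 => by
    have hstep := hf (mem_Ioi.2 (hw.trans_le (le_add_of_nonneg_right n.cast_nonneg)))
      (mem_Ioi.2 (hw.trans_le (by linarith [n.cast_nonneg (α := ℝ)] : w ≤ z + n)))
      (by linarith : w + n ≤ z + n)
    have ih := sub_add_nat_le_sub_of_antitoneOn hf hw hwz n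
    simp only [Nat.cast_succ, ← add_assoc] at hstep ⊢
    linarith

/-- By log-convexity, the slope of `log ∘ Γ` on `[a, b]` is at least its slope `log (a - 1)` on
`[a - 1, a]`. -/
lemma Real.mul_log_sub_one_le_log_Gamma_sub {a b : ℝ} (ha : 1 < a) (hab : a ≤ b) :
    (b - a) * log (a - 1) ≤ log (Gamma b) - log (Gamma a) := by
  rcases hab.eq_or_lt with rfl | hab
  · simp
  have ha₁ : 0 < a - 1 := by linarith
  have hslope := convexOn_log_Gamma.slope_mono_adjacent (mem_Ioi.2 ha₁)
    (mem_Ioi.2 (by linarith : (0 : ℝ) < b)) (sub_one_lt a) hab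
  have hGamma : Gamma a = (a - 1) * Gamma (a - 1) := by
    simpa using Gamma_add_one ha₁.ne'
  simp only [Function.comp_apply, hGamma, log_mul ha₁.ne' (Gamma_pos_of_pos ha₁).ne',
    sub_sub_cancel, div_one, add_sub_cancel_right] at hslope
  rw [le_div_iff₀ (sub_pos.2 hab)] at hslope
  rw [hGamma, log_mul ha₁.ne' (Gamma_pos_of_pos ha₁).ne']
  linarith

lemma inv_add_half_le_log_add_one_sub_log {x : ℝ} (hx : 0 < x) :
    (x + 1 / 2)⁻¹ ≤ log (x + 1) - log x := by
  have h := le_log_one_add_of_nonneg (inv_nonneg.2 hx.le)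
  rwa [show 2 * x⁻¹ / (x⁻¹ + 2) = (x + 1 / 2)⁻¹ by field_simp; ring,
    show 1 + x⁻¹ = (x + 1) / x by field_simp, log_div (by positivity) hx.ne'] at h

noncomputable def gammaHalfDefect (x : ℝ) : ℝ :=
  log (Gamma (x + 1 / 2)) - (x * log x - x)

lemma gammaHalfDefect_add_one_sub {x : ℝ} (hx : 0 < x) :
    gammaHalfDefect (x + 1) - gammaHalfDefect x =
      log (x + 1 / 2) - (x + 1) * log (x + 1) + x * log x + 1 := by
  have hx' : 0 < x + 1 / 2 := by linarith
  rw [gammaHalfDefect, gammaHalfDefect, add_right_comm, Gamma_add_one hx'.ne',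
    log_mul hx'.ne' (Gamma_pos_of_pos hx').ne']
  ring

lemma antitoneOn_gammaHalfDefect_add_one_sub :
    AntitoneOn (fun x => gammaHalfDefect (x + 1) - gammaHalfDefect x) (Ioi 0) := by
  have hderiv : ∀ x ∈ Ioi (0 : ℝ), HasDerivAt
      (fun x => log (x + 1 / 2) - (x + 1) * log (x + 1) + x * log x + 1)
      ((x + 1 / 2)⁻¹ - (log (x + 1) - log x)) x := by
    intro x (hx : 0 < x)
    have h₁ := (hasDerivAt_log (by linarith : x + 1 / 2 ≠ 0)).comp_add_const x (1 / 2)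
    have h₂ := (hasDerivAt_mul_log (by linarith : x + 1 ≠ 0)).comp_add_const x 1
    have h₃ := hasDerivAt_mul_log hx.ne'
    exact (((h₁.sub h₂).add h₃).add_const 1).congr_deriv (by ring)
  have hanti := antitoneOn_of_hasDerivWithinAt_nonpos (convex_Ioi 0)
    (fun x hx => (hderiv x hx).continuousAt.continuousWithinAt)
    (fun x hx => (hderiv x (interior_subset hx)).hasDerivWithinAt)
    (fun x hx => sub_nonpos.2
      (inv_add_half_le_log_add_one_sub_log (interior_subset (s := Ioi 0) hx)))
  intro x hx y hy hxy
  simp only [gammaHalfDefect_add_one_sub hx, gammaHalfDefect_add_one_sub hy]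
  exact hanti hx hy hxy

lemma mul_log_sub_log_le_gammaHalfDefect_sub {w z : ℝ} (hw : 1 / 2 < w) (hwz : w ≤ z) :
    (z - w) * (log (w - 1 / 2) - log z) ≤ gammaHalfDefect z - gammaHalfDefect w := by
  have hw₀ : 0 < w := by linarith
  have hz₀ : 0 < z := by linarith
  have hGamma := mul_log_sub_one_le_log_Gamma_sub (by linarith : 1 < w + 1 / 2)
    (by linarith : w + 1 / 2 ≤ z + 1 / 2)
  -- tangent line of the convex function `x log x - x` at `z`
  have htangent : z * log z - z - (w * log w - w) ≤ (z - w) * log z := by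
    have h := one_sub_inv_le_log_of_pos (div_pos hw₀ hz₀)
    rw [inv_div, log_div hw₀.ne' hz₀.ne', one_sub_div hw₀.ne', div_le_iff₀ hw₀] at h
    linarith
  rw [show z + 1 / 2 - (w + 1 / 2) = z - w by ring, show w + 1 / 2 - 1 = w - 1 / 2 by ring]
    at hGamma
  rw [gammaHalfDefect, gammaHalfDefect]
  linarith

lemma monotoneOn_gammaHalfDefect : MonotoneOn gammaHalfDefect (Ioi 0) := by
  intro u (hu : 0 < u) v (hv : 0 < v) huv
  have hlim : Tendsto (fun n : ℕ => (v - u) * (log (u + (n + 1) - 1 / 2) - log (v + (n + 1))))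
      atTop (𝓝 0) := by
    have hshift : Tendsto (fun n : ℕ => v + (n + 1)) atTop atTop :=
      tendsto_atTop_add_const_left _ _
        (tendsto_atTop_add_const_right _ _ tendsto_natCast_atTop_atTop)
    have h := ((tendsto_log_comp_add_sub_log (u - v - 1 / 2)).comp hshift).const_mul (v - u)
    rw [mul_zero] at h
    refine h.congr fun n => ?_
    simp only [Function.comp_apply]
    ring_nf
  refine sub_nonneg.1 (le_of_tendsto' hlim fun n => ?_)
  have hlower := mul_log_sub_log_le_gammaHalfDefect_sub (w := u + (n + 1)) (z := v + (n + 1))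
    (by linarith [n.cast_nonneg (α := ℝ)]) (by linarith)
  have htelescope := sub_add_nat_le_sub_of_antitoneOn antitoneOn_gammaHalfDefect_add_one_sub hu
    huv (n + 1)
  rw [add_sub_add_right_eq_sub] at hlower
  push_cast at htelescope
  exact hlower.trans htelescope

theorem stmt_14 (u v : ℝ) (hu : 0 < u) (huv : u ≤ v) :
    Real.Gamma (v + 1 / 2) / Real.Gamma (u + 1 / 2) ≥
      v ^ v / (Real.exp (v - u) * u ^ u) := by
  have hv : 0 < v := hu.trans_le huv
  have hmono := monotoneOn_gammaHalfDefect (mem_Ioi.2 hu) (mem_Ioi.2 hv) huv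
  have hΓu := Gamma_pos_of_pos (by linarith : 0 < u + 1 / 2)
  have hΓv := Gamma_pos_of_pos (by linarith : 0 < v + 1 / 2)
  rw [ge_iff_le, ← exp_log hΓu, ← exp_log hΓv, ← exp_sub, rpow_def_of_pos hu,
    rpow_def_of_pos hv, ← exp_add, ← exp_sub, exp_le_exp]
  rw [gammaHalfDefect, gammaHalfDefect] at hmono
  linarith
end

section
/- For 0 < a ≤ x, a^{x−a} Γ(a+1)/Γ(x+1) ≤ (a + 1/2)^{a+1/2} (ae)^{x−a} / (x + 1/2)^{x+1/2} ≤ ((a+1/2)/(x+1/2))^{1/2} · (a/x)^x · e^{x−a}. -/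
/-!
Each inequality compares two values of a monotone function.

For the first, `t ↦ log Γ(t+1) + t - (t+1/2) log(t+1/2)` is nondecreasing on `(0, ∞)`. Its
derivative is `D t = ψ(t+1) - log(t+1/2)` with `ψ = logDeriv Γ`, and `D t ≥ 0` because `D` decreases
along `t, t+1, t+2, …` (by `ψ(s+1) = ψ(s) + 1/s` and `1/(s+1) ≤ log((s+3/2)/(s+1/2))`), while the
log-convexity of `Γ` gives `ψ(s+1) ≥ log s`, hence `D s ≥ -1/(2s) → 0`.

For the second, `t ↦ a log(a+t) - x log(x+t)` has derivative `t(a-x)/((a+t)(x+t)) ≤ 0` on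
`[0, ∞)`, so its value at `1/2` is at most its value at `0`.
-/

open Real Filter Set Topology

lemma hasDerivAt_log_Gamma {s : ℝ} (hs : ∀ m : ℕ, s ≠ -m) :
    HasDerivAt (fun u => log (Gamma u)) (logDeriv Gamma s) s :=
  (differentiableAt_Gamma hs).hasDerivAt.log (Gamma_ne_zero hs)

lemma logDeriv_Gamma_add_one {s : ℝ} (hs : ∀ m : ℕ, s ≠ -m) :
    logDeriv Gamma (s + 1) = logDeriv Gamma s + s⁻¹ := by
  have hs0 : s ≠ 0 := by simpa using hs 0
  have hfeq : (fun z => Gamma (z + 1)) =ᶠ[𝓝 s] fun z => z * Gamma z := by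
    filter_upwards [isOpen_ne.mem_nhds hs0] with z hz using Gamma_add_one hz
  have hderiv : deriv Gamma (s + 1) = Gamma s + s * deriv Gamma s := by
    rw [← deriv_comp_add_const, hfeq.deriv_eq,
      deriv_fun_mul differentiableAt_fun_id (differentiableAt_Gamma hs), deriv_id'', one_mul]
  rw [logDeriv_apply, logDeriv_apply, hderiv, Gamma_add_one hs0]
  field_simp [Gamma_ne_zero hs]
  ring

lemma log_le_logDeriv_Gamma_add_one {t : ℝ} (ht : 0 < t) : log t ≤ logDeriv Gamma (t + 1) := by
  have hslope := convexOn_log_Gamma.slope_le_of_hasDerivAt (mem_Ioi.2 ht)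
    (mem_Ioi.2 (by linarith : (0 : ℝ) < t + 1)) (lt_add_one t) (hasDerivAt_log_Gamma (by bound))
  rwa [slope_def_field, Function.comp_apply, Function.comp_apply, Gamma_add_one ht.ne',
    log_mul ht.ne' (Gamma_pos_of_pos ht).ne', add_sub_cancel_right, add_sub_cancel_left,
    div_one] at hslope

lemma two_div_le_log_one_add_inv {a : ℝ} (ha : 0 < a) : 2 / (2 * a + 1) ≤ log (1 + a⁻¹) := by
  simpa [div_eq_mul_inv] using le_hasSum (hasSum_log_one_add_inv ha) 0 fun j _ => by positivity

lemma log_add_half_le_logDeriv_Gamma_add_one {t : ℝ} (ht : 0 < t) :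
    log (t + 1 / 2) ≤ logDeriv Gamma (t + 1) := by
  set D : ℝ → ℝ := fun s => logDeriv Gamma (s + 1) - log (s + 1 / 2) with hD
  have hstep : ∀ s, 0 < s → D (s + 1) ≤ D s := by
    intro s hs
    have hlog := two_div_le_log_one_add_inv (by linarith : 0 < s + 1 / 2)
    have e1 : 1 + (s + 1 / 2)⁻¹ = (s + 1 + 1 / 2) / (s + 1 / 2) := by field_simp; ring
    have e2 : 2 / (2 * (s + 1 / 2) + 1) = (s + 1)⁻¹ := by field_simp; ring
    rw [e1, e2, log_div (by linarith) (by linarith)] at hlog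
    simp only [hD, logDeriv_Gamma_add_one (s := s + 1) (by bound)]
    linarith
  have hanti : ∀ n : ℕ, D (t + n) ≤ D t := by
    intro n
    induction n with
    | zero => simp
    | succ n ih =>
      calc D (t + (n + 1 : ℕ)) = D (t + n + 1) := by push_cast; ring_nf
        _ ≤ D (t + n) := hstep _ (by positivity)
        _ ≤ D t := ih
  have hlower : ∀ s, 0 < s → -(2 * s)⁻¹ ≤ D s := by
    intro s hs
    have h1 := log_le_logDeriv_Gamma_add_one hs
    have h2 := log_le_sub_one_of_pos (by positivity : 0 < (s + 1 / 2) / s)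
    have e : (s + 1 / 2) / s - 1 = (2 * s)⁻¹ := by field_simp; ring
    rw [log_div (by linarith) hs.ne', e] at h2
    simp only [hD]
    linarith
  have hlim : Tendsto (fun n : ℕ => -(2 * (t + n))⁻¹) atTop (𝓝 0) := by
    rw [← neg_zero]
    exact (tendsto_inv_atTop_zero.comp ((tendsto_atTop_add_const_left _ t
      tendsto_natCast_atTop_atTop).const_mul_atTop two_pos)).neg
  have : 0 ≤ D t :=
    le_of_tendsto' hlim fun n => (hlower _ (by positivity)).trans (hanti n)
  simpa [hD] using this

lemma monotoneOn_log_Gamma_add_one_add_sub_mul_log :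
    MonotoneOn (fun t => log (Gamma (t + 1)) + t - (t + 1 / 2) * log (t + 1 / 2)) (Ioi 0) := by
  have hderiv : ∀ t ∈ Ioi (0 : ℝ), HasDerivAt
      (fun t => log (Gamma (t + 1)) + t - (t + 1 / 2) * log (t + 1 / 2))
      (logDeriv Gamma (t + 1) - log (t + 1 / 2)) t := by
    intro t (ht : 0 < t)
    have hΓ := (hasDerivAt_log_Gamma (s := t + 1) (by bound)).comp_add_const t 1
    have hshift := (hasDerivAt_id' t).add_const (1 / 2)
    refine ((hΓ.add (hasDerivAt_id' t)).sub (hshift.mul (hshift.log (by linarith)))).congr_deriv ?_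
    field_simp
    ring
  refine monotoneOn_of_hasDerivWithinAt_nonneg (convex_Ioi 0)
    (f' := fun t => logDeriv Gamma (t + 1) - log (t + 1 / 2))
    (fun t ht => (hderiv t ht).continuousAt.continuousWithinAt) ?_ ?_ <;> rw [interior_Ioi]
  · exact fun t ht => (hderiv t ht).hasDerivWithinAt
  · exact fun t ht => sub_nonneg.2 (log_add_half_le_logDeriv_Gamma_add_one ht)

lemma antitoneOn_mul_log_add_sub_mul_log_add {a x : ℝ} (ha : 0 < a) (hax : a ≤ x) :
    AntitoneOn (fun t => a * log (a + t) - x * log (x + t)) (Ici 0) := by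
  have hderiv : ∀ t ∈ Ici (0 : ℝ), HasDerivAt (fun t => a * log (a + t) - x * log (x + t))
      (a / (a + t) - x / (x + t)) t := by
    intro t (ht : 0 ≤ t)
    have hla := ((hasDerivAt_id' t).const_add a).log (by linarith)
    have hlx := ((hasDerivAt_id' t).const_add x).log (by linarith)
    refine ((hla.const_mul a).sub (hlx.const_mul x)).congr_deriv ?_
    ring
  refine antitoneOn_of_hasDerivWithinAt_nonpos (convex_Ici 0)
    (f' := fun t => a / (a + t) - x / (x + t))
    (fun t ht => (hderiv t ht).continuousAt.continuousWithinAt) ?_ ?_ <;> rw [interior_Ici]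
  · exact fun t ht => (hderiv t (mem_Ioi.1 ht).le).hasDerivWithinAt
  · intro t (ht : 0 < t)
    have hat : 0 < a + t := by positivity
    have hxt : 0 < x + t := by linarith
    have hdiff : a / (a + t) - x / (x + t) = t * (a - x) / ((a + t) * (x + t)) := by
      field_simp; ring
    rw [hdiff]
    exact div_nonpos_of_nonpos_of_nonneg (mul_nonpos_of_nonneg_of_nonpos ht.le (by linarith))
      (by positivity)

lemma rpow_mul_Gamma_add_one_div_Gamma_add_one_le {a x : ℝ} (ha : 0 < a) (hax : a ≤ x) :
    a ^ (x - a) * Gamma (a + 1) / Gamma (x + 1) ≤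
      (a + 1 / 2) ^ (a + 1 / 2) * (a * exp 1) ^ (x - a) / (x + 1 / 2) ^ (x + 1 / 2) := by
  have hx : 0 < x := ha.trans_le hax
  have hmono := monotoneOn_log_Gamma_add_one_add_sub_mul_log ha hx hax
  rw [← log_le_log_iff (by positivity) (by positivity),
    log_div (by positivity) (Gamma_pos_of_pos (by linarith)).ne',
    log_mul (by positivity) (Gamma_pos_of_pos (by linarith)).ne', log_rpow ha,
    log_div (by positivity) (by positivity), log_mul (by positivity) (by positivity),
    log_rpow (by positivity : 0 < a + 1 / 2), log_rpow (by positivity : 0 < x + 1 / 2),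
    log_rpow (by positivity : 0 < a * exp 1),
    log_mul ha.ne' (exp_ne_zero 1), log_exp]
  simp only at hmono
  linarith

lemma add_half_rpow_mul_div_add_half_rpow_le {a x : ℝ} (ha : 0 < a) (hax : a ≤ x) :
    (a + 1 / 2) ^ (a + 1 / 2) * (a * exp 1) ^ (x - a) / (x + 1 / 2) ^ (x + 1 / 2) ≤
      ((a + 1 / 2) / (x + 1 / 2)) ^ ((1 : ℝ) / 2) * (a / x) ^ x * exp (x - a) := by
  have hx : 0 < x := ha.trans_le hax
  have hanti := antitoneOn_mul_log_add_sub_mul_log_add ha hax self_mem_Ici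
    (by norm_num : (1 / 2 : ℝ) ∈ Ici 0) (by norm_num)
  rw [← log_le_log_iff (by positivity) (by positivity),
    log_div (by positivity) (by positivity), log_mul (by positivity) (by positivity),
    log_rpow (by positivity : 0 < a + 1 / 2), log_rpow (by positivity : 0 < x + 1 / 2),
    log_rpow (by positivity : 0 < a * exp 1),
    log_mul ha.ne' (exp_ne_zero 1), log_exp,
    log_mul (by positivity) (exp_ne_zero _), log_mul (by positivity) (by positivity),
    log_rpow (by positivity), log_rpow (by positivity), log_exp,
    log_div (by linarith) (by linarith), log_div ha.ne' hx.ne']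
  simp only [add_zero] at hanti
  linarith

theorem stmt_15 (a x : ℝ) (ha : 0 < a) (hax : a ≤ x) :
    a ^ (x - a) * Real.Gamma (a + 1) / Real.Gamma (x + 1) ≤
        (a + 1 / 2) ^ (a + 1 / 2) * (a * Real.exp 1) ^ (x - a) /
          (x + 1 / 2) ^ (x + 1 / 2) ∧
      (a + 1 / 2) ^ (a + 1 / 2) * (a * Real.exp 1) ^ (x - a) /
          (x + 1 / 2) ^ (x + 1 / 2) ≤
        ((a + 1 / 2) / (x + 1 / 2)) ^ ((1 : ℝ) / 2) * (a / x) ^ x *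
          Real.exp (x - a) :=
  ⟨rpow_mul_Gamma_add_one_div_Gamma_add_one_le ha hax,
    add_half_rpow_mul_div_add_half_rpow_le ha hax⟩
end

section
/- Let X, Y be real-valued random variables and b, c ∈ ℝ. If there exists a coupling with P(X ≤ Y + b) = 1 and a (possibly different) coupling with P(Y ≤ X + c) = 1, then F_Y(t−b) ≤ F_X(t) ≤ F_Y(t+c) for all t, and hence there exists a single coupling with P(X − b ≤ Y ≤ X + c) = 1. -/
open MeasureTheory ProbabilityTheory Set Filter

/-!
If `Y ≤ X + c` almost surely under some coupling, then `F_X(t) ≤ F_Y(t + c)`, since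
`{X ≤ t} ⊆ {Y ≤ t + c}` up to a null set; symmetrically the other coupling gives
`F_Y(t - b) ≤ F_X(t)`. Feeding one uniform variable `U` on `(0, 1)` into both quantile functions
`Q_X`, `Q_Y` gives a coupling of the two laws, and since `Q(u) ≤ s ↔ u ≤ F(s)`, a shift bound
between the cdfs turns into the reverse shift bound between the quantiles:
`Q_Y(U) ≤ Q_X(U) + c` and `Q_X(U) ≤ Q_Y(U) + b` hold for every `U`.
-/

-- On `(0, 1)` the set below is nonempty and bounded below, so `sInf` is never a junk value.
noncomputable def quantile (ν : Measure ℝ) (u : Ioo (0 : ℝ) 1) : ℝ := sInf {x | (u : ℝ) ≤ cdf ν x}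

section Quantile

variable (ν : Measure ℝ)

lemma quantile_le_iff (u : Ioo (0 : ℝ) 1) (t : ℝ) : quantile ν u ≤ t ↔ (u : ℝ) ≤ cdf ν t := by
  obtain ⟨u, hu0, hu1⟩ := u
  obtain ⟨x₀, hx₀⟩ := eventually_atBot.mp ((tendsto_cdf_atBot ν).eventually_lt_const hu0)
  obtain ⟨x₁, hx₁⟩ := eventually_atTop.mp ((tendsto_cdf_atTop ν).eventually_const_lt hu1)
  have hbdd : BddBelow {x | u ≤ cdf ν x} :=
    ⟨x₀, fun x hx => le_of_not_ge fun h => (hx₀ x h).not_ge hx⟩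
  have hne : {x | u ≤ cdf ν x}.Nonempty := ⟨x₁, (hx₁ x₁ le_rfl).le⟩
  refine ⟨fun h => ?_, fun h => csInf_le hbdd h⟩
  refine ge_of_tendsto
    (((cdf ν).right_continuous' t).mono_left (nhdsWithin_mono t Ioi_subset_Ici_self)) ?_
  filter_upwards [self_mem_nhdsWithin] with x (hx : t < x)
  obtain ⟨y, hy, hyx⟩ := (csInf_lt_iff hbdd hne).mp (h.trans_lt hx)
  exact hy.trans (monotone_cdf ν hyx.le)

lemma le_cdf_quantile (u : Ioo (0 : ℝ) 1) : (u : ℝ) ≤ cdf ν (quantile ν u) :=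
  (quantile_le_iff ν u _).mp le_rfl

lemma monotone_quantile : Monotone (quantile ν) := fun u v huv =>
  (quantile_le_iff ν u _).mpr (le_trans huv (le_cdf_quantile ν v))

lemma measurable_quantile : Measurable (quantile ν) := (monotone_quantile ν).measurable

end Quantile

instance : IsProbabilityMeasure (volume.comap ((↑) : Ioo (0 : ℝ) 1 → ℝ)) := by
  constructor
  rw [comap_subtype_coe_apply measurableSet_Ioo, image_univ, Subtype.range_coe, Real.volume_Ioo]
  norm_num

lemma map_quantile (ν : Measure ℝ) [IsProbabilityMeasure ν] :
    (volume.comap ((↑) : Ioo (0 : ℝ) 1 → ℝ)).map (quantile ν) = ν := by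
  refine Measure.ext_of_Iic _ _ fun t => ?_
  have hpre : quantile ν ⁻¹' Iic t = (↑) ⁻¹' Iic (cdf ν t) := by
    ext u
    exact quantile_le_iff ν u t
  have himage : ((↑) '' ((↑) ⁻¹' Iic (cdf ν t) : Set (Ioo (0 : ℝ) 1)) : Set ℝ)
      = Ioc 0 (cdf ν t) \ {1} := by
    rw [Subtype.image_preimage_coe]
    ext x
    simp only [mem_inter_iff, mem_Ioo, mem_Iic, Set.mem_sdiff, mem_Ioc, mem_singleton_iff]
    constructor
    · rintro ⟨⟨h0, h1⟩, hx⟩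
      exact ⟨⟨h0, hx⟩, h1.ne⟩
    · rintro ⟨⟨h0, hx⟩, h1⟩
      exact ⟨⟨h0, lt_of_le_of_ne (hx.trans (cdf_le_one ν t)) h1⟩, hx⟩
  rw [Measure.map_apply (measurable_quantile ν) measurableSet_Iic, hpre,
    comap_subtype_coe_apply measurableSet_Ioo, himage,
    measure_sdiff_null (Real.volume_singleton), Real.volume_Ioc, sub_zero, ofReal_cdf]

lemma cdf_map_eq_toReal {Ω : Type*} [MeasurableSpace Ω] (μ : Measure Ω) [IsProbabilityMeasure μ]
    {X : Ω → ℝ} (hX : Measurable X) (t : ℝ) : cdf (μ.map X) t = (μ {ω | X ω ≤ t}).toReal := by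
  have := Measure.isProbabilityMeasure_map (μ := μ) hX.aemeasurable
  rw [cdf_eq_real, map_measureReal_apply hX measurableSet_Iic]
  rfl

lemma cdf_map_le_cdf_map_add {Ω : Type*} [MeasurableSpace Ω] (μ : Measure Ω)
    [IsProbabilityMeasure μ] {X Y : Ω → ℝ} (hX : Measurable X) (hY : Measurable Y) {c : ℝ}
    (hXY : ∀ᵐ ω ∂μ, Y ω ≤ X ω + c) (t : ℝ) :
    cdf (μ.map X) t ≤ cdf (μ.map Y) (t + c) := by
  have := Measure.isProbabilityMeasure_map (μ := μ) hX.aemeasurable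
  have := Measure.isProbabilityMeasure_map (μ := μ) hY.aemeasurable
  rw [cdf_eq_real, cdf_eq_real, map_measureReal_apply hX measurableSet_Iic,
    map_measureReal_apply hY measurableSet_Iic]
  refine ENNReal.toReal_mono (measure_ne_top _ _) (measure_mono_ae ?_)
  filter_upwards [hXY] with ω hω (hXt : X ω ≤ t)
  show Y ω ≤ t + c
  linarith

lemma quantile_le_quantile_add {ν ν' : Measure ℝ} [IsProbabilityMeasure ν]
    [IsProbabilityMeasure ν'] {c : ℝ} (h : ∀ t, cdf ν t ≤ cdf ν' (t + c)) (u : Ioo (0 : ℝ) 1) :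
    quantile ν' u ≤ quantile ν u + c :=
  (quantile_le_iff ν' u _).mpr ((le_cdf_quantile ν u).trans (h _))

theorem stmt_17
    {Ω₁ Ω₂ : Type*} [MeasurableSpace Ω₁] [MeasurableSpace Ω₂]
    (μ₁ : Measure Ω₁) (μ₂ : Measure Ω₂)
    [IsProbabilityMeasure μ₁] [IsProbabilityMeasure μ₂]
    (X : Ω₁ → ℝ) (Y : Ω₂ → ℝ) (hX : Measurable X) (hY : Measurable Y)
    (b c : ℝ)
    (hcoup1 : ∃ (Ω : Type) (_ : MeasurableSpace Ω) (μ : Measure Ω),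
      IsProbabilityMeasure μ ∧
        ∃ X' Y' : Ω → ℝ, Measurable X' ∧ Measurable Y' ∧
          Measure.map X' μ = Measure.map X μ₁ ∧
          Measure.map Y' μ = Measure.map Y μ₂ ∧
          μ {ω | X' ω ≤ Y' ω + b} = 1)
    (hcoup2 : ∃ (Ω : Type) (_ : MeasurableSpace Ω) (μ : Measure Ω),
      IsProbabilityMeasure μ ∧
        ∃ X' Y' : Ω → ℝ, Measurable X' ∧ Measurable Y' ∧
          Measure.map X' μ = Measure.map X μ₁ ∧
          Measure.map Y' μ = Measure.map Y μ₂ ∧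
          μ {ω | Y' ω ≤ X' ω + c} = 1) :
    (∀ t : ℝ,
      (μ₂ {ω | Y ω ≤ t - b}).toReal ≤ (μ₁ {ω | X ω ≤ t}).toReal ∧
        (μ₁ {ω | X ω ≤ t}).toReal ≤ (μ₂ {ω | Y ω ≤ t + c}).toReal) ∧
      ∃ (Ω : Type) (_ : MeasurableSpace Ω) (μ : Measure Ω),
        IsProbabilityMeasure μ ∧
          ∃ X' Y' : Ω → ℝ, Measurable X' ∧ Measurable Y' ∧
            Measure.map X' μ = Measure.map X μ₁ ∧
            Measure.map Y' μ = Measure.map Y μ₂ ∧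
            μ {ω | X' ω - b ≤ Y' ω ∧ Y' ω ≤ X' ω + c} = 1 := by
  obtain ⟨Ω, _, μ, _, X₁, Y₁, hX₁, hY₁, hX₁μ, hY₁μ, hcoupled₁⟩ := hcoup1
  obtain ⟨Ω', _, μ', _, X₂, Y₂, hX₂, hY₂, hX₂μ, hY₂μ, hcoupled₂⟩ := hcoup2
  have := Measure.isProbabilityMeasure_map (μ := μ₁) hX.aemeasurable
  have := Measure.isProbabilityMeasure_map (μ := μ₂) hY.aemeasurable
  have hYX (t : ℝ) : cdf (μ₂.map Y) t ≤ cdf (μ₁.map X) (t + b) := by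
    have hae := (mem_ae_iff_prob_eq_one (measurableSet_le hX₁ (hY₁.add_const b))).2 hcoupled₁
    simpa [← hX₁μ, ← hY₁μ] using cdf_map_le_cdf_map_add μ hY₁ hX₁ hae t
  have hXY (t : ℝ) : cdf (μ₁.map X) t ≤ cdf (μ₂.map Y) (t + c) := by
    have hae := (mem_ae_iff_prob_eq_one (measurableSet_le hY₂ (hX₂.add_const c))).2 hcoupled₂
    simpa [← hX₂μ, ← hY₂μ] using cdf_map_le_cdf_map_add μ' hX₂ hY₂ hae t
  refine ⟨fun t => ?_, Ioo (0 : ℝ) 1, inferInstance, volume.comap Subtype.val, inferInstance,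
    quantile (μ₁.map X), quantile (μ₂.map Y), measurable_quantile _, measurable_quantile _,
    map_quantile _, map_quantile _, ?_⟩
  · simp only [← cdf_map_eq_toReal _ hX, ← cdf_map_eq_toReal _ hY]
    exact ⟨by simpa using hYX (t - b), hXY t⟩
  · suffices {u | quantile (μ₁.map X) u - b ≤ quantile (μ₂.map Y) u ∧
        quantile (μ₂.map Y) u ≤ quantile (μ₁.map X) u + c} = univ by
      rw [this, measure_univ]
    refine eq_univ_of_forall fun u => ⟨?_, quantile_le_quantile_add hXY u⟩
    linarith [quantile_le_quantile_add hYX u]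
end

section
/- Let ρ be the Dickman function, defined as the unique continuous function on [0,∞) with ρ(u) = 1 for 0 ≤ u ≤ 1 and u ρ'(u) = −ρ(u−1) for u > 1 (equivalently u ρ(u) = ∫_{u−1}^{u} ρ(v) dv for u ≥ 1). Then 0 < ρ(u) ≤ 1/Γ(u+1) for all u ≥ 0. -/
/-!
At the first point `c` where `ρ` would fail to be positive, `c ρ(c) = ∫_{c-1}^c ρ > 0`, so `ρ`
stays positive. Differentiating the integral equation gives `u ρ'(u) = -ρ(u - 1) < 0`, so `ρ` is
non-increasing and `u ρ(u) ≤ ρ(u - 1)`. Since `Γ(u + 1) = u Γ(u)`, the bound `ρ ≤ 1 / Γ(· + 1)`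
propagates from `[n, n + 1]` to `[n + 1, n + 2]`; on `[0, 1]` it is `Γ(u + 1) ≤ 1`, by convexity
of `Γ` between `Γ(1) = Γ(2) = 1`.
-/

open Set MeasureTheory intervalIntegral

theorem Real.Gamma_add_one_le_one {u : ℝ} (hu₀ : 0 ≤ u) (hu₁ : u ≤ 1) : Gamma (u + 1) ≤ 1 := by
  have h := convexOn_Gamma.2 (mem_Ioi.2 one_pos) (mem_Ioi.2 two_pos)
    (sub_nonneg.2 hu₁) hu₀ (sub_add_cancel 1 u)
  simp only [smul_eq_mul, Gamma_one, Gamma_two] at h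
  have hmid : (1 - u) * 1 + u * 2 = u + 1 := by ring
  rw [hmid] at h
  linarith

theorem ContinuousOn.intervalIntegrable_of_Ici {f : ℝ → ℝ} {a b c : ℝ}
    (hf : ContinuousOn f (Ici a)) (hb : a ≤ b) (hbc : b ≤ c) :
    IntervalIntegrable f volume b c :=
  (hf.mono (Icc_subset_Ici_iff hbc |>.2 hb)).intervalIntegrable_of_Icc hbc

theorem ContinuousOn.hasDerivAt_integral_of_Ici {f : ℝ → ℝ} {a x : ℝ}
    (hf : ContinuousOn f (Ici a)) (hx : a < x) :
    HasDerivAt (fun u => ∫ v in a..u, f v) (f x) x :=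
  integral_hasDerivAt_right (hf.intervalIntegrable_of_Ici le_rfl hx.le)
    ((hf.mono Ioi_subset_Ici_self).stronglyMeasurableAtFilter isOpen_Ioi x hx)
    (hf.continuousAt (Ici_mem_nhds hx))

theorem ContinuousOn.hasDerivAt_integral_sub_one {f : ℝ → ℝ} {a x : ℝ}
    (hf : ContinuousOn f (Ici a)) (hx : a + 1 < x) :
    HasDerivAt (fun u => ∫ v in (u - 1)..u, f v) (f x - f (x - 1)) x := by
  have hF := (hf.hasDerivAt_integral_of_Ici (x := x) (by linarith)).sub
    ((hf.hasDerivAt_integral_of_Ici (x := x - 1) (by linarith)).comp_sub_const x 1)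
  refine hF.congr_of_eventuallyEq ?_
  filter_upwards [Ioi_mem_nhds hx] with u (hu : a + 1 < u)
  exact (integral_interval_sub_left (hf.intervalIntegrable_of_Ici le_rfl (by linarith))
    (hf.intervalIntegrable_of_Ici le_rfl (by linarith))).symm

structure IsDickman (ρ : ℝ → ℝ) : Prop where
  continuousOn : ContinuousOn ρ (Ici 0)
  eq_one : ∀ u : ℝ, 0 ≤ u → u ≤ 1 → ρ u = 1
  mul_eq_integral : ∀ u : ℝ, 1 ≤ u → u * ρ u = ∫ v in (u - 1)..u, ρ v

namespace IsDickman

variable {ρ : ℝ → ℝ}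

theorem pos (h : IsDickman ρ) {u : ℝ} (hu : 0 ≤ u) : 0 < ρ u := by
  by_contra! hneg
  set S := Ici 0 ∩ ρ ⁻¹' Iic 0
  have hbdd : BddBelow S := ⟨0, fun _ hx => hx.1⟩
  obtain ⟨hc₀ : 0 ≤ sInf S, hc : ρ (sInf S) ≤ 0⟩ : sInf S ∈ S :=
    (h.continuousOn.preimage_isClosed_of_isClosed isClosed_Ici isClosed_Iic).csInf_mem
      ⟨u, hu, hneg⟩ hbdd
  set c := sInf S
  have hc₁ : 1 < c := by
    by_contra! hc₁
    linarith [h.eq_one c hc₀ hc₁]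
  have hbefore : ∀ v ∈ Ioo (c - 1) c, 0 < ρ v := fun v hv => by
    by_contra! hv'
    exact hv.2.not_ge (csInf_le hbdd ⟨show 0 ≤ v by linarith [hv.1], hv'⟩)
  have hint : 0 < ∫ v in (c - 1)..c, ρ v :=
    intervalIntegral_pos_of_pos_on
      (h.continuousOn.intervalIntegrable_of_Ici (by linarith) (by linarith)) hbefore
      (by linarith)
  nlinarith [h.mul_eq_integral c hc₁.le]

theorem hasDerivAt (h : IsDickman ρ) {x : ℝ} (hx : 1 < x) :
    HasDerivAt ρ (-ρ (x - 1) / x) x := by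
  have hx₀ : x ≠ 0 := by positivity
  have hq : HasDerivAt (fun u => (∫ v in (u - 1)..u, ρ v) / u)
      (((ρ x - ρ (x - 1)) * x - x * ρ x * 1) / x ^ 2) x := by
    rw [h.mul_eq_integral x hx.le]
    exact (h.continuousOn.hasDerivAt_integral_sub_one (by linarith : (0 : ℝ) + 1 < x)).div
      (hasDerivAt_id' x) hx₀
  refine (hq.congr_of_eventuallyEq ?_).congr_deriv (by field_simp; ring)
  filter_upwards [Ioi_mem_nhds hx] with u (hu : 1 < u)
  rw [← h.mul_eq_integral u hu.le, mul_div_cancel_left₀ _ (by positivity)]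

theorem antitoneOn (h : IsDickman ρ) : AntitoneOn ρ (Ici 0) := by
  have hconst : AntitoneOn ρ (Icc 0 1) := fun a ha b hb _ => by
    rw [h.eq_one a ha.1 ha.2, h.eq_one b hb.1 hb.2]
  have hderiv : AntitoneOn ρ (Ici 1) := by
    refine antitoneOn_of_deriv_nonpos (convex_Ici 1)
      (h.continuousOn.mono (Ici_subset_Ici.2 zero_le_one)) ?_ ?_ <;> rw [interior_Ici]
    · exact fun x hx => (h.hasDerivAt hx).differentiableAt.differentiableWithinAt
    · intro x hx
      rw [(h.hasDerivAt hx).deriv]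
      have := h.pos (sub_nonneg.2 (le_of_lt hx))
      exact div_nonpos_of_nonpos_of_nonneg (by linarith) (by linarith [mem_Ioi.1 hx])
  rw [← Icc_union_Ici_eq_Ici zero_le_one]
  exact hconst.union_right hderiv (isGreatest_Icc zero_le_one) isLeast_Ici

theorem mul_le_sub_one (h : IsDickman ρ) {u : ℝ} (hu : 1 ≤ u) : u * ρ u ≤ ρ (u - 1) := by
  have hu₀ : 0 ≤ u - 1 := sub_nonneg.2 hu
  calc u * ρ u = ∫ v in (u - 1)..u, ρ v := h.mul_eq_integral u hu
    _ ≤ ∫ _ in (u - 1)..u, ρ (u - 1) :=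
        integral_mono_on (by linarith) (h.continuousOn.intervalIntegrable_of_Ici hu₀ (by linarith))
          intervalIntegrable_const fun v hv => h.antitoneOn hu₀ (hu₀.trans hv.1) hv.1
    _ = ρ (u - 1) := by simp

theorem le_one_div_Gamma (h : IsDickman ρ) {u : ℝ} (hu : 0 ≤ u) :
    ρ u ≤ 1 / Real.Gamma (u + 1) := by
  suffices ∀ n : ℕ, ∀ u : ℝ, 0 ≤ u → u ≤ n + 1 → ρ u ≤ 1 / Real.Gamma (u + 1) from
    this ⌈u⌉₊ u hu (by linarith [Nat.le_ceil u])
  intro n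
  induction n with
  | zero =>
    intro u hu₀ hu₁
    rw [Nat.cast_zero, zero_add] at hu₁
    rw [h.eq_one u hu₀ hu₁, le_div_iff₀ (Real.Gamma_pos_of_pos (by linarith)), one_mul]
    exact Real.Gamma_add_one_le_one hu₀ hu₁
  | succ n ih =>
    intro u hu₀ hun
    rcases le_or_gt u (n + 1) with hle | hgt
    · exact ih u hu₀ hle
    have hu₁ : 1 ≤ u := by linarith [(n.cast_nonneg : (0 : ℝ) ≤ n)]
    have hu_pos : 0 < u := by linarith
    have hprev : ρ (u - 1) ≤ 1 / Real.Gamma u := by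
      simpa using ih (u - 1) (by linarith) (by push_cast at hun; linarith)
    calc ρ u ≤ ρ (u - 1) / u := (le_div_iff₀ hu_pos).2 (by linarith [h.mul_le_sub_one hu₁])
      _ ≤ 1 / Real.Gamma u / u := by gcongr
      _ = 1 / Real.Gamma (u + 1) := by
        rw [Real.Gamma_add_one hu_pos.ne', div_div, mul_comm]

end IsDickman

theorem stmt_19 (ρ : ℝ → ℝ)
    (hcont : ContinuousOn ρ (Set.Ici 0))
    (hinit : ∀ u : ℝ, 0 ≤ u → u ≤ 1 → ρ u = 1)
    (heq : ∀ u : ℝ, 1 ≤ u → u * ρ u = ∫ v in (u - 1)..u, ρ v) :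
    ∀ u : ℝ, 0 ≤ u → 0 < ρ u ∧ ρ u ≤ 1 / Real.Gamma (u + 1) := by
  have h : IsDickman ρ := ⟨hcont, hinit, heq⟩
  exact fun u hu => ⟨h.pos hu, h.le_one_div_Gamma hu⟩
end
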